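/- arXiv:2603.08864 — 10 statements merged into one kernel-verified Lean document; each statement's English description precedes it below -/
import Mathlib

section
/- Let p > 1 and α < 0 be real numbers. Then for every finitely supported sequence u : ℕ → ℂ with u_0 = 0, one has ∑_{n=1}^∞ n^α |u_n − u_{n−1}|^p ≥ ((p − α − 1)/p)^p · ∑_{n=1}^∞ (n+1)^{α−p} |u_n|^p. -/
/-!
Ground-state (Picone) argument. Put `γ = (p - α - 1) / p > 0`, `t n = ‖u n‖`,
`g n = ∑_{k<n} (k+1)^(γ-1)` (a discrete version of `n^γ / γ`) and `F n = t n ^ p / g n ^ (p-1)`.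
Convexity of `x ↦ x^p` (Radon's inequality) gives the discrete Picone estimate
`F (n+1) - F n ≤ |t (n+1) - t n|^p / ((n+1)^(γ-1))^(p-1)`, which after multiplication by
`(n+1)^(-γ)` is bounded by the gradient term `(n+1)^α |t (n+1) - t n|^p`. Summing by parts turns
`∑ (n+1)^(-γ) (F (n+1) - F n)` into `∑ ((n+1)^(-γ) - (n+2)^(-γ)) F (n+1)`, and the mean value
theorem together with `g (n+1) ≤ (n+2)^γ / γ` bounds each of these terms below by
`γ^p (n+2)^(α-p) t (n+1)^p`.
-/

open Real Finset

theorem exists_add_one_rpow_sub_rpow_eq {r a : ℝ} (ha : 0 ≤ a) (hr : 0 < a ∨ 0 ≤ r) :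
    ∃ ξ ∈ Set.Ioo a (a + 1), (a + 1) ^ r - a ^ r = r * ξ ^ (r - 1) := by
  have hcont : ContinuousOn (fun x : ℝ ↦ x ^ r) (Set.Icc a (a + 1)) := fun x hx ↦
    (continuousAt_rpow_const x r (hr.imp (fun ha' ↦ (ha'.trans_le hx.1).ne') id)).continuousWithinAt
  obtain ⟨ξ, hξ, h⟩ := exists_hasDerivAt_eq_slope (fun x : ℝ ↦ x ^ r) (fun x ↦ r * x ^ (r - 1))
    (lt_add_one a) hcont fun x hx ↦ hasDerivAt_rpow_const (Or.inl (ha.trans_lt hx.1).ne')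
  exact ⟨ξ, hξ, by simpa using h.symm⟩

theorem mul_add_one_rpow_le_add_one_rpow_sub_rpow {r a : ℝ} (hr₀ : 0 ≤ r) (hr₁ : r ≤ 1)
    (ha : 0 ≤ a) : r * (a + 1) ^ (r - 1) ≤ (a + 1) ^ r - a ^ r := by
  obtain ⟨ξ, hξ, h⟩ := exists_add_one_rpow_sub_rpow_eq ha (Or.inr hr₀)
  rw [h]
  exact mul_le_mul_of_nonneg_left
    (rpow_le_rpow_of_nonpos (ha.trans_lt hξ.1) hξ.2.le (sub_nonpos.2 hr₁)) hr₀

theorem mul_rpow_le_add_one_rpow_sub_rpow {r a : ℝ} (hr : 1 ≤ r) (ha : 0 < a) :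
    r * a ^ (r - 1) ≤ (a + 1) ^ r - a ^ r := by
  obtain ⟨ξ, hξ, h⟩ := exists_add_one_rpow_sub_rpow_eq ha.le (Or.inl ha)
  rw [h]
  gcongr
  exact hξ.1.le

theorem mul_add_one_rpow_neg_le_rpow_neg_sub {γ a : ℝ} (hγ : 0 ≤ γ) (ha : 0 < a) :
    γ * (a + 1) ^ (-γ - 1) ≤ a ^ (-γ) - (a + 1) ^ (-γ) := by
  obtain ⟨ξ, hξ, h⟩ := exists_add_one_rpow_sub_rpow_eq (r := -γ) ha.le (Or.inl ha)
  rw [show a ^ (-γ) - (a + 1) ^ (-γ) = γ * ξ ^ (-γ - 1) by linarith]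
  exact mul_le_mul_of_nonneg_left
    (rpow_le_rpow_of_nonpos (ha.trans hξ.1) hξ.2.le (by linarith)) hγ

noncomputable def rpowPartialSum (s : ℝ) (n : ℕ) : ℝ := ∑ k ∈ range n, ((k : ℝ) + 1) ^ s

theorem rpowPartialSum_succ (s : ℝ) (n : ℕ) :
    rpowPartialSum s (n + 1) = rpowPartialSum s n + ((n : ℝ) + 1) ^ s :=
  sum_range_succ _ n

theorem rpowPartialSum_nonneg (s : ℝ) (n : ℕ) : 0 ≤ rpowPartialSum s n :=
  sum_nonneg fun _ _ ↦ by positivity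

theorem rpowPartialSum_succ_pos (s : ℝ) (n : ℕ) : 0 < rpowPartialSum s (n + 1) := by
  rw [rpowPartialSum_succ]
  exact add_pos_of_nonneg_of_pos (rpowPartialSum_nonneg s n) (by positivity)

theorem rpowPartialSum_le {γ : ℝ} (hγ : 0 < γ) (n : ℕ) :
    rpowPartialSum (γ - 1) n ≤ ((n : ℝ) + 1) ^ γ / γ := by
  rw [le_div_iff₀ hγ, rpowPartialSum, sum_mul]
  rcases le_total γ 1 with hγ1 | hγ1
  · calc ∑ k ∈ range n, ((k : ℝ) + 1) ^ (γ - 1) * γ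
          ≤ ∑ k ∈ range n, (((k + 1 : ℕ) : ℝ) ^ γ - (k : ℝ) ^ γ) := sum_le_sum fun k _ ↦ by
            push_cast
            linarith [mul_add_one_rpow_le_add_one_rpow_sub_rpow hγ.le hγ1 k.cast_nonneg]
      _ = (n : ℝ) ^ γ := by
            rw [sum_range_sub (fun k : ℕ ↦ (k : ℝ) ^ γ)]
            simp [zero_rpow hγ.ne']
      _ ≤ ((n : ℝ) + 1) ^ γ := rpow_le_rpow n.cast_nonneg (lt_add_one _).le hγ.le
  · calc ∑ k ∈ range n, ((k : ℝ) + 1) ^ (γ - 1) * γ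
          ≤ ∑ k ∈ range n, ((((k + 1 : ℕ) : ℝ) + 1) ^ γ - ((k : ℝ) + 1) ^ γ) :=
            sum_le_sum fun k _ ↦ by
              push_cast
              linarith [mul_rpow_le_add_one_rpow_sub_rpow hγ1 (k.cast_add_one_pos (α := ℝ))]
      _ = ((n : ℝ) + 1) ^ γ - 1 := by
            rw [sum_range_sub (fun k : ℕ ↦ ((k : ℝ) + 1) ^ γ)]
            simp
      _ ≤ ((n : ℝ) + 1) ^ γ := by linarith

theorem rpow_div_rpow_sub_one {p x y : ℝ} (hx : 0 ≤ x) (hy : 0 < y) :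
    x ^ p / y ^ (p - 1) = y * (x / y) ^ p := by
  rw [div_rpow hx hy.le, rpow_sub_one hy.ne']
  field_simp

theorem add_rpow_div_rpow_le {p a b A C : ℝ} (hp : 1 ≤ p) (ha : 0 ≤ a) (hb : 0 ≤ b)
    (hA : 0 < A) (hC : 0 < C) :
    (a + b) ^ p / (A + C) ^ (p - 1) ≤ a ^ p / A ^ (p - 1) + b ^ p / C ^ (p - 1) := by
  have hB : 0 < A + C := add_pos hA hC
  rw [rpow_div_rpow_sub_one (add_nonneg ha hb) hB, rpow_div_rpow_sub_one ha hA,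
    rpow_div_rpow_sub_one hb hC]
  have hmean : (a + b) / (A + C) = A / (A + C) * (a / A) + C / (A + C) * (b / C) := by
    field_simp
  have hconv := (convexOn_rpow hp).2 (Set.mem_Ici.2 (div_nonneg ha hA.le))
    (Set.mem_Ici.2 (div_nonneg hb hC.le)) (div_nonneg hA.le hB.le) (div_nonneg hC.le hB.le)
    (by field_simp)
  simp only [smul_eq_mul] at hconv
  calc (A + C) * ((a + b) / (A + C)) ^ p
      ≤ (A + C) * (A / (A + C) * (a / A) ^ p + C / (A + C) * (b / C) ^ p) := by
        rw [hmean]; gcongr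
    _ = A * (a / A) ^ p + C * (b / C) ^ p := by field_simp

theorem rpow_div_rpow_sub_rpow_div_rpow_le {p t s A C : ℝ} (hp : 1 ≤ p) (ht : 0 ≤ t)
    (hs : 0 ≤ s) (hA : 0 ≤ A) (hC : 0 < C) (hsA : A = 0 → s = 0) :
    t ^ p / (A + C) ^ (p - 1) - s ^ p / A ^ (p - 1) ≤ |t - s| ^ p / C ^ (p - 1) := by
  rw [sub_le_iff_le_add']
  rcases hA.eq_or_lt with rfl | hA
  · obtain rfl := hsA rfl
    simp [zero_rpow (by linarith : p ≠ 0), abs_of_nonneg ht]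
  · calc t ^ p / (A + C) ^ (p - 1) ≤ (s + |t - s|) ^ p / (A + C) ^ (p - 1) := by
          gcongr
          linarith [le_abs_self (t - s)]
      _ ≤ _ := add_rpow_div_rpow_le hp hs (abs_nonneg _) hA hC

theorem sum_range_mul_sub_eq_sum_range_sub_mul {R : Type*} [CommRing R] (c F : ℕ → R) {N : ℕ}
    (hF0 : F 0 = 0) (hFN : F N = 0) :
    ∑ m ∈ range N, c m * (F (m + 1) - F m) = ∑ m ∈ range N, (c m - c (m + 1)) * F (m + 1) := by
  rw [← sub_eq_zero, ← sum_sub_distrib]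
  calc ∑ m ∈ range N, (c m * (F (m + 1) - F m) - (c m - c (m + 1)) * F (m + 1))
      = ∑ m ∈ range N, (c (m + 1) * F (m + 1) - c m * F m) := sum_congr rfl fun _ _ ↦ by ring
    _ = 0 := by rw [sum_range_sub (fun m ↦ c m * F m)]; simp [hF0, hFN]

noncomputable def piconeQuotient (p γ : ℝ) (t : ℕ → ℝ) (n : ℕ) : ℝ :=
  t n ^ p / rpowPartialSum (γ - 1) n ^ (p - 1)

section piconeQuotient

variable {p γ : ℝ} {t : ℕ → ℝ}

theorem piconeQuotient_nonneg (ht : ∀ n, 0 ≤ t n) (n : ℕ) : 0 ≤ piconeQuotient p γ t n :=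
  div_nonneg (rpow_nonneg (ht n) p) (rpow_nonneg (rpowPartialSum_nonneg _ n) _)

theorem piconeQuotient_of_eq_zero (hp : p ≠ 0) {n : ℕ} (hn : t n = 0) :
    piconeQuotient p γ t n = 0 := by
  simp [piconeQuotient, hn, zero_rpow hp]

theorem piconeQuotient_succ_sub_le (hp : 1 ≤ p) (ht : ∀ n, 0 ≤ t n) (ht0 : t 0 = 0) (n : ℕ) :
    piconeQuotient p γ t (n + 1) - piconeQuotient p γ t n ≤
      |t (n + 1) - t n| ^ p / (((n : ℝ) + 1) ^ (γ - 1)) ^ (p - 1) := by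
  rw [piconeQuotient, piconeQuotient, rpowPartialSum_succ]
  refine rpow_div_rpow_sub_rpow_div_rpow_le hp (ht _) (ht _) (rpowPartialSum_nonneg _ n)
    (by positivity) fun h ↦ ?_
  cases n with
  | zero => exact ht0
  | succ m => exact absurd h (rpowPartialSum_succ_pos _ m).ne'

theorem rpow_mul_rpowPartialSum_le (hp : 1 ≤ p) (hγ : 0 < γ) (n : ℕ) :
    γ ^ p * ((n : ℝ) + 2) ^ (-(γ * p) - 1) * rpowPartialSum (γ - 1) (n + 1) ^ (p - 1) ≤
      ((n : ℝ) + 1) ^ (-γ) - ((n : ℝ) + 2) ^ (-γ) := by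
  have hg : rpowPartialSum (γ - 1) (n + 1) ≤ ((n : ℝ) + 2) ^ γ / γ := by
    have := rpowPartialSum_le hγ (n + 1)
    push_cast at this
    rwa [add_assoc, one_add_one_eq_two] at this
  have htail := mul_add_one_rpow_neg_le_rpow_neg_sub hγ.le (n.cast_add_one_pos (α := ℝ))
  rw [add_assoc, one_add_one_eq_two] at htail
  set x : ℝ := (n : ℝ) + 2
  have hx : 0 < x := by positivity
  calc γ ^ p * x ^ (-(γ * p) - 1) * rpowPartialSum (γ - 1) (n + 1) ^ (p - 1)
      ≤ γ ^ p * x ^ (-(γ * p) - 1) * (x ^ γ / γ) ^ (p - 1) := by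
        gcongr
        exact rpowPartialSum_nonneg _ _
    _ = γ * x ^ (-γ - 1) := by
        rw [div_rpow (rpow_nonneg hx.le γ) hγ.le, ← rpow_mul hx.le,
          show γ ^ p = γ ^ (p - 1) * γ by rw [← rpow_add_one hγ.ne']; ring_nf,
          show x ^ (-(γ * p) - 1) = x ^ (-γ - 1) / x ^ (γ * (p - 1)) by
            rw [← rpow_sub hx]; ring_nf]
        field_simp
    _ ≤ ((n : ℝ) + 1) ^ (-γ) - x ^ (-γ) := htail

theorem mul_rpow_le_sub_mul_piconeQuotient (hp : 1 ≤ p) (hγ : 0 < γ) (ht : ∀ n, 0 ≤ t n)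
    (n : ℕ) :
    γ ^ p * (((n : ℝ) + 2) ^ (-(γ * p) - 1) * t (n + 1) ^ p) ≤
      (((n : ℝ) + 1) ^ (-γ) - ((n : ℝ) + 2) ^ (-γ)) * piconeQuotient p γ t (n + 1) := by
  have hg := rpow_pos_of_pos (rpowPartialSum_succ_pos (γ - 1) n) (p - 1)
  calc γ ^ p * (((n : ℝ) + 2) ^ (-(γ * p) - 1) * t (n + 1) ^ p)
      = γ ^ p * ((n : ℝ) + 2) ^ (-(γ * p) - 1) * rpowPartialSum (γ - 1) (n + 1) ^ (p - 1) *
          piconeQuotient p γ t (n + 1) := by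
        rw [piconeQuotient]; field_simp
    _ ≤ _ := mul_le_mul_of_nonneg_right (rpow_mul_rpowPartialSum_le hp hγ n)
        (piconeQuotient_nonneg ht _)

theorem rpow_neg_mul_piconeQuotient_succ_sub_le (hp : 1 ≤ p) (ht : ∀ n, 0 ≤ t n)
    (ht0 : t 0 = 0) (n : ℕ) :
    ((n : ℝ) + 1) ^ (-γ) * (piconeQuotient p γ t (n + 1) - piconeQuotient p γ t n) ≤
      ((n : ℝ) + 1) ^ (-γ - (γ - 1) * (p - 1)) * |t (n + 1) - t n| ^ p := by
  have hx : (0 : ℝ) < (n : ℝ) + 1 := n.cast_add_one_pos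
  calc ((n : ℝ) + 1) ^ (-γ) * (piconeQuotient p γ t (n + 1) - piconeQuotient p γ t n)
      ≤ ((n : ℝ) + 1) ^ (-γ) *
          (|t (n + 1) - t n| ^ p / (((n : ℝ) + 1) ^ (γ - 1)) ^ (p - 1)) :=
        mul_le_mul_of_nonneg_left (piconeQuotient_succ_sub_le hp ht ht0 n) (by positivity)
    _ = ((n : ℝ) + 1) ^ (-γ - (γ - 1) * (p - 1)) * |t (n + 1) - t n| ^ p := by
        rw [← rpow_mul hx.le, ← mul_div_assoc, mul_div_right_comm, ← rpow_sub hx]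

end piconeQuotient

theorem weighted_hardy_sum_range {p α : ℝ} (hp : 1 ≤ p) (hα : α < p - 1) {t : ℕ → ℝ}
    (ht : ∀ n, 0 ≤ t n) (ht0 : t 0 = 0) {N : ℕ} (htN : t N = 0) :
    ((p - α - 1) / p) ^ p * ∑ n ∈ range N, ((n : ℝ) + 2) ^ (α - p) * t (n + 1) ^ p ≤
      ∑ n ∈ range N, ((n : ℝ) + 1) ^ α * |t (n + 1) - t n| ^ p := by
  set γ := (p - α - 1) / p
  have hp0 : 0 < p := by linarith
  have hγ : 0 < γ := div_pos (by linarith) hp0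
  have hγp : γ * p = p - α - 1 := div_mul_cancel₀ _ hp0.ne'
  have hαp : α - p = -(γ * p) - 1 := by linear_combination hγp
  have hαγ : -γ - (γ - 1) * (p - 1) = α := by linear_combination -hγp
  set F := piconeQuotient p γ t
  rw [hαp, mul_sum]
  calc ∑ n ∈ range N, γ ^ p * (((n : ℝ) + 2) ^ (-(γ * p) - 1) * t (n + 1) ^ p)
      ≤ ∑ n ∈ range N, (((n : ℝ) + 1) ^ (-γ) - (((n + 1 : ℕ) : ℝ) + 1) ^ (-γ)) * F (n + 1) :=
        sum_le_sum fun n _ ↦ by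
          push_cast
          rw [add_assoc, one_add_one_eq_two]
          exact mul_rpow_le_sub_mul_piconeQuotient hp hγ ht n
    _ = ∑ n ∈ range N, ((n : ℝ) + 1) ^ (-γ) * (F (n + 1) - F n) :=
        (sum_range_mul_sub_eq_sum_range_sub_mul (fun m : ℕ ↦ ((m : ℝ) + 1) ^ (-γ)) F
          (piconeQuotient_of_eq_zero hp0.ne' ht0) (piconeQuotient_of_eq_zero hp0.ne' htN)).symm
    _ ≤ ∑ n ∈ range N, ((n : ℝ) + 1) ^ α * |t (n + 1) - t n| ^ p := sum_le_sum fun n _ ↦ by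
        rw [← hαγ]
        exact rpow_neg_mul_piconeQuotient_succ_sub_le hp ht ht0 n

/-- Weighted discrete p-Hardy (Copson-type) inequality with negative exponent. -/
theorem weighted_p_Hardy (p α : ℝ) (hp : 1 < p) (hα : α < 0)
    (u : ℕ → ℂ) (hfin : (Function.support u).Finite) (h0 : u 0 = 0) :
    ∑' n : ℕ, ((n + 1 : ℕ) : ℝ) ^ α * ‖u (n + 1) - u n‖ ^ p ≥
      ((p - α - 1) / p) ^ p *
        ∑' n : ℕ, ((n + 2 : ℕ) : ℝ) ^ (α - p) * ‖u (n + 1)‖ ^ p := by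
  obtain ⟨N, hN⟩ : ∃ N, ∀ n, N ≤ n → u n = 0 := by
    obtain ⟨M, hM⟩ := hfin.bddAbove
    exact ⟨M + 1, fun n hn ↦ Function.notMem_support.1 fun h ↦ by have := hM h; omega⟩
  have hp0 : p ≠ 0 := (zero_lt_one.trans hp).ne'
  have hlhs : ∑' n : ℕ, ((n + 1 : ℕ) : ℝ) ^ α * ‖u (n + 1) - u n‖ ^ p
      = ∑ n ∈ range N, ((n + 1 : ℕ) : ℝ) ^ α * ‖u (n + 1) - u n‖ ^ p :=
    tsum_eq_sum fun n hn ↦ by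
      simp [hN n (by simpa using hn), hN (n + 1) (by simp at hn; omega), zero_rpow hp0]
  have hrhs : ∑' n : ℕ, ((n + 2 : ℕ) : ℝ) ^ (α - p) * ‖u (n + 1)‖ ^ p
      = ∑ n ∈ range N, ((n + 2 : ℕ) : ℝ) ^ (α - p) * ‖u (n + 1)‖ ^ p :=
    tsum_eq_sum fun n hn ↦ by simp [hN (n + 1) (by simp at hn; omega), zero_rpow hp0]
  rw [ge_iff_le, hlhs, hrhs]
  push_cast
  calc _ ≤ ∑ n ∈ range N, ((n : ℝ) + 1) ^ α * |‖u (n + 1)‖ - ‖u n‖| ^ p :=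
        weighted_hardy_sum_range hp.le (by linarith) (fun n ↦ norm_nonneg (u n))
          (by simp [h0]) (by simp [hN N le_rfl])
    _ ≤ _ := by
        gcongr with n
        exact abs_norm_sub_norm_le _ _
end

section
/- Let p > 1 and α < 0 be real numbers. The constant C_p(α) = ((p − α − 1)/p)^p in the weighted discrete p-Hardy inequality with weight (n+1)^{α−p} is optimal: the infimum, over all finitely supported sequences u : ℕ → ℂ with u_0 = 0 and u not identically zero, of the ratio (∑_{n=1}^∞ n^α |u_n − u_{n−1}|^p) / (∑_{n=1}^∞ (n+1)^{α−p} |u_n|^p) equals ((p − α − 1)/p)^p. -/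
/-!
Lower bound. Put `γ = (p - α - 1) / p`, so that `α + (γ - 1) p = -1`. Write `u (m + 1)` as the sum
of the increments `a k = ‖u (k + 1) - u k‖`, `k ≤ m`, and apply Hölder's inequality with the weights
`(k + 1) ^ (γ - 1)`, whose partial sums are at most `(m + 2) ^ γ / γ`. Exchanging the order of
summation leaves the tails `∑_{m ≥ k} (m + 2) ^ (-γ - 1) ≤ (k + 1) ^ (-γ) / γ`, and the powers of
`k + 1` recombine to `(k + 1) ^ α`: this is the Hardy inequality with constant `γ ^ p`. Both sum
estimates telescope, by the tangent-line (Bernoulli) bounds for `x ↦ x ^ r`.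

Optimality. The sequence `n ^ γ`, cut off linearly to zero between `N` and `2 N`, makes each
increment term of the power part at most `γ ^ p / n` and each weighted term at least
`1 / (n + 1) - O(1 / n ^ 2)`, while the linear cutoff contributes `O(1)`. So the gradient sum is
at most `γ ^ p log N + O(1)`, the weighted sum at least `log N - O(1)`, and the quotient tends to
`γ ^ p`.
-/

open Finset Real Filter

namespace Real

theorem one_add_mul_sub_one_le_rpow_of_nonpos {x r : ℝ} (hx : 0 < x) (hr : r ≤ 0) :
    1 + r * (x - 1) ≤ x ^ r := by
  rw [rpow_def_of_pos hx]
  nlinarith [add_one_le_exp (log x * r), log_le_sub_one_of_pos hx]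

/- Tangent-line bounds for `x ↦ x ^ r` at a point `a > 0`, obtained from the ones at `1`
(Bernoulli's inequality) by scaling with `a ^ r`. -/
theorem rpow_add_mul_sub_le_of_bernoulli {r a b : ℝ} (ha : 0 < a) (hb : 0 ≤ b)
    (h : 1 + r * (b / a - 1) ≤ (b / a) ^ r) :
    a ^ r + r * a ^ (r - 1) * (b - a) ≤ b ^ r := by
  have hbr : b ^ r = a ^ r * (b / a) ^ r := by
    rw [div_rpow hb ha.le, mul_div_cancel₀ _ (rpow_pos_of_pos ha r).ne']
  rw [hbr, rpow_sub_one ha.ne']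
  calc a ^ r + r * (a ^ r / a) * (b - a) = a ^ r * (1 + r * (b / a - 1)) := by
        field_simp
    _ ≤ a ^ r * (b / a) ^ r := mul_le_mul_of_nonneg_left h (rpow_nonneg ha.le r)

theorem rpow_le_rpow_add_mul_sub_of_bernoulli {r a b : ℝ} (ha : 0 < a) (hb : 0 ≤ b)
    (h : (b / a) ^ r ≤ 1 + r * (b / a - 1)) :
    b ^ r ≤ a ^ r + r * a ^ (r - 1) * (b - a) := by
  have hbr : b ^ r = a ^ r * (b / a) ^ r := by
    rw [div_rpow hb ha.le, mul_div_cancel₀ _ (rpow_pos_of_pos ha r).ne']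
  rw [hbr, rpow_sub_one ha.ne']
  calc a ^ r * (b / a) ^ r ≤ a ^ r * (1 + r * (b / a - 1)) :=
        mul_le_mul_of_nonneg_left h (rpow_nonneg ha.le r)
    _ = a ^ r + r * (a ^ r / a) * (b - a) := by field_simp

theorem rpow_add_mul_sub_le_of_one_le {r a b : ℝ} (hr : 1 ≤ r) (ha : 0 < a) (hb : 0 ≤ b) :
    a ^ r + r * a ^ (r - 1) * (b - a) ≤ b ^ r := by
  refine rpow_add_mul_sub_le_of_bernoulli ha hb ?_
  simpa [mul_comm] using one_add_mul_self_le_rpow_one_add (s := b / a - 1) (by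
    have := div_nonneg hb ha.le; linarith) hr

theorem rpow_le_rpow_add_mul_sub_of_le_one {r a b : ℝ} (hr₀ : 0 ≤ r) (hr₁ : r ≤ 1) (ha : 0 < a)
    (hb : 0 ≤ b) : b ^ r ≤ a ^ r + r * a ^ (r - 1) * (b - a) := by
  refine rpow_le_rpow_add_mul_sub_of_bernoulli ha hb ?_
  simpa [mul_comm] using rpow_one_add_le_one_add_mul_self (s := b / a - 1) (by
    have := div_nonneg hb ha.le; linarith) hr₀ hr₁

theorem rpow_add_mul_sub_le_of_nonpos {r a b : ℝ} (hr : r ≤ 0) (ha : 0 < a) (hb : 0 < b) :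
    a ^ r + r * a ^ (r - 1) * (b - a) ≤ b ^ r :=
  rpow_add_mul_sub_le_of_bernoulli ha hb.le
    (one_add_mul_sub_one_le_rpow_of_nonpos (div_pos hb ha) hr)

end Real

theorem sum_range_rpow_sub_one_le {γ : ℝ} (hγ : 0 < γ) (n : ℕ) :
    ∑ k ∈ range n, ((k : ℝ) + 1) ^ (γ - 1) ≤ ((n : ℝ) + 1) ^ γ / γ := by
  rw [le_div_iff₀ hγ, sum_mul]
  rcases le_total γ 1 with hγ₁ | hγ₁
  · have hstep (k : ℕ) : ((k : ℝ) + 1) ^ (γ - 1) * γ ≤ ((k + 1 : ℕ) : ℝ) ^ γ - (k : ℝ) ^ γ := by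
      have := rpow_le_rpow_add_mul_sub_of_le_one hγ.le hγ₁ (a := (k : ℝ) + 1) (b := k)
        (by positivity) (by positivity)
      push_cast
      linarith
    calc _ ≤ ∑ k ∈ range n, (((k + 1 : ℕ) : ℝ) ^ γ - (k : ℝ) ^ γ) := sum_le_sum fun k _ ↦ hstep k
      _ = (n : ℝ) ^ γ := by rw [sum_range_sub (fun k : ℕ ↦ (k : ℝ) ^ γ)]; simp [zero_rpow hγ.ne']
      _ ≤ ((n : ℝ) + 1) ^ γ := by gcongr; linarith
  · have hstep (k : ℕ) : ((k : ℝ) + 1) ^ (γ - 1) * γ ≤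
        (((k + 1 : ℕ) : ℝ) + 1) ^ γ - ((k : ℝ) + 1) ^ γ := by
      have := rpow_add_mul_sub_le_of_one_le hγ₁ (a := (k : ℝ) + 1) (b := k + 2)
        (by positivity) (by positivity)
      push_cast
      ring_nf at this ⊢
      linarith
    calc _ ≤ ∑ k ∈ range n, ((((k + 1 : ℕ) : ℝ) + 1) ^ γ - ((k : ℝ) + 1) ^ γ) :=
          sum_le_sum fun k _ ↦ hstep k
      _ = ((n : ℝ) + 1) ^ γ - 1 := by rw [sum_range_sub (fun k : ℕ ↦ ((k : ℝ) + 1) ^ γ)]; simp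
      _ ≤ ((n : ℝ) + 1) ^ γ := by linarith

theorem sum_Ico_rpow_neg_sub_one_le {γ : ℝ} (hγ : 0 < γ) (k M : ℕ) :
    ∑ m ∈ Ico k M, ((m : ℝ) + 2) ^ (-γ - 1) ≤ ((k : ℝ) + 1) ^ (-γ) / γ := by
  set g : ℕ → ℝ := fun i ↦ (((k + i : ℕ) : ℝ) + 1) ^ (-γ)
  have hstep (i : ℕ) : (((k + i : ℕ) : ℝ) + 2) ^ (-γ - 1) * γ ≤ g i - g (i + 1) := by
    have := rpow_add_mul_sub_le_of_nonpos (r := -γ) (neg_nonpos.2 hγ.le)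
      (a := ((k + i : ℕ) : ℝ) + 2) (b := ((k + i : ℕ) : ℝ) + 1) (by positivity) (by positivity)
    simp only [g]
    push_cast at this ⊢
    ring_nf at this ⊢
    linarith
  rw [le_div_iff₀ hγ, sum_mul, sum_Ico_eq_sum_range]
  calc _ ≤ ∑ i ∈ range (M - k), (g i - g (i + 1)) := sum_le_sum fun i _ ↦ hstep i
    _ = g 0 - g (M - k) := sum_range_sub' g _
    _ ≤ ((k : ℝ) + 1) ^ (-γ) := by
        simp only [g, add_zero]
        linarith [rpow_nonneg (by positivity : (0 : ℝ) ≤ ((k + (M - k) : ℕ) : ℝ) + 1) (-γ)]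

theorem rpow_sum_le_rpow_sum_mul_sum {ι : Type*} (s : Finset ι) {p : ℝ} (hp : 1 ≤ p)
    {w a : ι → ℝ} (hw : ∀ i, 0 < w i) (ha : ∀ i, 0 ≤ a i) :
    (∑ i ∈ s, a i) ^ p ≤ (∑ i ∈ s, w i) ^ (p - 1) * ∑ i ∈ s, w i ^ (1 - p) * a i ^ p := by
  have hp₀ : 0 < p := by linarith
  have hW : 0 ≤ ∑ i ∈ s, w i := sum_nonneg fun i _ ↦ (hw i).le
  have hweight (i : ι) : w i * (a i / w i) ^ p = w i ^ (1 - p) * a i ^ p := by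
    rw [div_rpow (ha i) (hw i).le, rpow_sub (hw i), rpow_one]
    field_simp
  have holder := inner_le_weight_mul_Lp_of_nonneg s hp w (fun i ↦ a i / w i)
    (fun i ↦ (hw i).le) (fun i ↦ div_nonneg (ha i) (hw i).le)
  simp only [hweight, mul_div_cancel₀ _ (hw _).ne'] at holder
  calc (∑ i ∈ s, a i) ^ p
      ≤ ((∑ i ∈ s, w i) ^ (1 - p⁻¹) * (∑ i ∈ s, w i ^ (1 - p) * a i ^ p) ^ p⁻¹) ^ p :=
        rpow_le_rpow (sum_nonneg fun i _ ↦ ha i) holder hp₀.le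
    _ = _ := by
        have hS : 0 ≤ ∑ i ∈ s, w i ^ (1 - p) * a i ^ p :=
          sum_nonneg fun i _ ↦ mul_nonneg (rpow_nonneg (hw i).le _) (rpow_nonneg (ha i) _)
        rw [mul_rpow (rpow_nonneg hW _) (rpow_nonneg hS _), ← rpow_mul hW, ← rpow_mul hS,
          inv_mul_cancel₀ hp₀.ne', rpow_one]
        congr 2
        field_simp

section Hardy

variable {p γ α : ℝ}

theorem hardy_term_le (hp : 1 ≤ p) (hγ : 0 < γ) (hαγ : α + (γ - 1) * p = -1) {a : ℕ → ℝ}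
    (ha : ∀ k, 0 ≤ a k) (m : ℕ) :
    γ ^ p * (((m : ℝ) + 2) ^ (α - p) * (∑ k ∈ range (m + 1), a k) ^ p) ≤
      γ * ∑ k ∈ range (m + 1), ((m : ℝ) + 2) ^ (-γ - 1) * (((k : ℝ) + 1) ^ (α + γ) * a k ^ p) := by
  have hm : (0 : ℝ) < (m : ℝ) + 2 := by positivity
  set W := ∑ k ∈ range (m + 1), ((k : ℝ) + 1) ^ (γ - 1)
  set S := ∑ k ∈ range (m + 1), ((k : ℝ) + 1) ^ (α + γ) * a k ^ p
  have hS : 0 ≤ S := sum_nonneg fun k _ ↦ mul_nonneg (by positivity) (rpow_nonneg (ha k) p)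
  have holder : (∑ k ∈ range (m + 1), a k) ^ p ≤ W ^ (p - 1) * S := by
    convert rpow_sum_le_rpow_sum_mul_sum (range (m + 1)) hp
      (w := fun k : ℕ ↦ ((k : ℝ) + 1) ^ (γ - 1)) (fun k ↦ by positivity) ha using 4 with k
    rw [← rpow_mul (by positivity)]
    congr 2
    linarith
  have hW : W ^ (p - 1) ≤ ((m : ℝ) + 2) ^ (γ * (p - 1)) * γ ^ (1 - p) := by
    calc W ^ (p - 1) ≤ (((m : ℝ) + 2) ^ γ / γ) ^ (p - 1) := by
          refine rpow_le_rpow (sum_nonneg fun k _ ↦ by positivity) ?_ (by linarith)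
          convert sum_range_rpow_sub_one_le hγ (m + 1) using 3
          push_cast; ring
      _ = ((m : ℝ) + 2) ^ (γ * (p - 1)) * γ ^ (1 - p) := by
          rw [div_rpow (by positivity) hγ.le, ← rpow_mul hm.le, div_eq_mul_inv,
            ← rpow_neg hγ.le, neg_sub]
  calc γ ^ p * (((m : ℝ) + 2) ^ (α - p) * (∑ k ∈ range (m + 1), a k) ^ p)
      ≤ γ ^ p * (((m : ℝ) + 2) ^ (α - p) *
          (((m : ℝ) + 2) ^ (γ * (p - 1)) * γ ^ (1 - p) * S)) := by
        gcongr
        exact holder.trans (mul_le_mul_of_nonneg_right hW hS)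
    _ = (γ ^ p * γ ^ (1 - p)) * (((m : ℝ) + 2) ^ (α - p) * ((m : ℝ) + 2) ^ (γ * (p - 1))) * S := by
        ring
    _ = γ * (((m : ℝ) + 2) ^ (-γ - 1) * S) := by
        have hexp : α - p + γ * (p - 1) = -γ - 1 := by linarith
        rw [← rpow_add hγ, ← rpow_add hm, add_sub_cancel, rpow_one, hexp, mul_assoc]
    _ = _ := by rw [mul_sum]

theorem hardy_sum_range_le (hp : 1 ≤ p) (hγ : 0 < γ) (hαγ : α + (γ - 1) * p = -1)
    {a : ℕ → ℝ} (ha : ∀ k, 0 ≤ a k) (M : ℕ) :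
    γ ^ p * ∑ m ∈ range M, ((m : ℝ) + 2) ^ (α - p) * (∑ k ∈ range (m + 1), a k) ^ p ≤
      ∑ k ∈ range M, ((k : ℝ) + 1) ^ α * a k ^ p := by
  set F : ℕ → ℕ → ℝ := fun m k ↦ ((m : ℝ) + 2) ^ (-γ - 1) * (((k : ℝ) + 1) ^ (α + γ) * a k ^ p)
  calc γ ^ p * ∑ m ∈ range M, ((m : ℝ) + 2) ^ (α - p) * (∑ k ∈ range (m + 1), a k) ^ p
      ≤ γ * ∑ m ∈ range M, ∑ k ∈ range (m + 1), F m k := by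
        rw [mul_sum, mul_sum]
        exact sum_le_sum fun m _ ↦ hardy_term_le hp hγ hαγ ha m
    _ = ∑ k ∈ range M, ((k : ℝ) + 1) ^ (α + γ) * a k ^ p *
          (γ * ∑ m ∈ Ico k M, ((m : ℝ) + 2) ^ (-γ - 1)) := by
        simp only [range_eq_Ico, ← sum_Ico_Ico_comm, mul_sum, F]
        refine sum_congr rfl fun k _ ↦ sum_congr rfl fun m _ ↦ by ring
    _ ≤ ∑ k ∈ range M, ((k : ℝ) + 1) ^ (α + γ) * a k ^ p * ((k : ℝ) + 1) ^ (-γ) := by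
        gcongr with k
        · exact mul_nonneg (by positivity) (rpow_nonneg (ha k) p)
        · rw [← le_div_iff₀' hγ]
          exact sum_Ico_rpow_neg_sub_one_le hγ k M
    _ = ∑ k ∈ range M, ((k : ℝ) + 1) ^ α * a k ^ p := by
        refine sum_congr rfl fun k _ ↦ ?_
        rw [mul_right_comm, ← rpow_add (by positivity), add_neg_cancel_right]

end Hardy

section Energy

variable {E : Type*} [NormedAddCommGroup E]

/- The summation index `n` is the paper's `n - 1`: these are `∑_{n ≥ 1} n^α ‖∇u_n‖^p` and
`∑_{n ≥ 1} (n + 1)^(α - p) ‖u_n‖^p`, the numerator and denominator of the quotient. -/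
noncomputable def gradEnergy (p α : ℝ) (u : ℕ → E) : ℝ :=
  ∑' n : ℕ, ((n + 1 : ℕ) : ℝ) ^ α * ‖u (n + 1) - u n‖ ^ p

noncomputable def weightedMass (p α : ℝ) (u : ℕ → E) : ℝ :=
  ∑' n : ℕ, ((n + 2 : ℕ) : ℝ) ^ (α - p) * ‖u (n + 1)‖ ^ p

theorem exists_eq_zero_of_support_finite {u : ℕ → E} (hu : (Function.support u).Finite) :
    ∃ N, ∀ n, N ≤ n → u n = 0 := by
  obtain ⟨B, hB⟩ := hu.bddAbove
  refine ⟨B + 1, fun n hn ↦ ?_⟩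
  by_contra h
  have := hB (Function.mem_support.2 h)
  omega

variable {p α : ℝ} {u : ℕ → E} {N : ℕ}

theorem gradEnergy_eq_sum (hp : p ≠ 0) (hN : ∀ n, N ≤ n → u n = 0) :
    gradEnergy p α u = ∑ n ∈ range N, ((n : ℝ) + 1) ^ α * ‖u (n + 1) - u n‖ ^ p := by
  rw [gradEnergy, tsum_eq_sum (s := range N)]
  · push_cast; rfl
  · intro n hn
    rw [mem_range, not_lt] at hn
    simp [hN n hn, hN (n + 1) (by omega), zero_rpow hp]

theorem weightedMass_eq_sum (hp : p ≠ 0) (hN : ∀ n, N ≤ n → u n = 0) :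
    weightedMass p α u = ∑ n ∈ range N, ((n : ℝ) + 2) ^ (α - p) * ‖u (n + 1)‖ ^ p := by
  rw [weightedMass, tsum_eq_sum (s := range N)]
  · push_cast; rfl
  · intro n hn
    rw [mem_range, not_lt] at hn
    simp [hN (n + 1) (by omega), zero_rpow hp]

theorem weightedMass_pos (hp : p ≠ 0) (hu : (Function.support u).Finite) (h0 : u 0 = 0)
    (hne : u ≠ 0) : 0 < weightedMass p α u := by
  obtain ⟨N, hN⟩ := exists_eq_zero_of_support_finite hu
  obtain ⟨m, hm⟩ := Function.ne_iff.1 hne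
  obtain ⟨n, rfl⟩ : ∃ n, m = n + 1 := Nat.exists_eq_succ_of_ne_zero (by rintro rfl; exact hm h0)
  rw [weightedMass_eq_sum hp hN]
  refine sum_pos' (fun k _ ↦ by positivity) ⟨n, ?_, by positivity⟩
  by_contra h
  exact hm (hN _ (by simp at h; omega))

theorem norm_le_sum_range_norm_sub (h0 : u 0 = 0) (n : ℕ) :
    ‖u n‖ ≤ ∑ k ∈ range n, ‖u (k + 1) - u k‖ := by
  simpa [sum_range_sub u, h0] using norm_sum_le (range n) fun k ↦ u (k + 1) - u k

theorem hardy_inequality {γ : ℝ} (hp : 1 ≤ p) (hγ : 0 < γ) (hαγ : α + (γ - 1) * p = -1)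
    (hu : (Function.support u).Finite) (h0 : u 0 = 0) :
    γ ^ p * weightedMass p α u ≤ gradEnergy p α u := by
  have hp₀ : p ≠ 0 := by positivity
  obtain ⟨N, hN⟩ := exists_eq_zero_of_support_finite hu
  rw [weightedMass_eq_sum hp₀ hN, gradEnergy_eq_sum hp₀ hN]
  refine le_trans ?_ (hardy_sum_range_le hp hγ hαγ (fun k ↦ norm_nonneg _) N)
  gcongr with n
  exact norm_le_sum_range_norm_sub h0 (n + 1)

theorem gradEnergy_ofReal (f : ℕ → ℝ) :
    gradEnergy p α (fun n ↦ (f n : ℂ)) = gradEnergy p α f := by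
  simp only [gradEnergy, ← Complex.ofReal_sub, Complex.norm_real]

theorem weightedMass_ofReal (f : ℕ → ℝ) :
    weightedMass p α (fun n ↦ (f n : ℂ)) = weightedMass p α f := by
  simp only [weightedMass, Complex.norm_real]

end Energy

theorem rpow_mul_rpow_sub_rpow_le {x α γ p : ℝ} (hx : 0 < x) (hα : α ≤ 0) (hγ : 0 < γ)
    (hp : 0 ≤ p) (hαγ : α + (γ - 1) * p = -1) :
    (x + 1) ^ α * ((x + 1) ^ γ - x ^ γ) ^ p ≤ γ ^ p / x := by
  obtain ⟨y, hxy, hyx, hstep⟩ : ∃ y, x ≤ y ∧ y ≤ x + 1 ∧ (x + 1) ^ γ - x ^ γ ≤ γ * y ^ (γ - 1) := by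
    rcases le_total γ 1 with hγ₁ | hγ₁
    · refine ⟨x, le_rfl, by linarith, ?_⟩
      have := rpow_le_rpow_add_mul_sub_of_le_one hγ.le hγ₁ hx (b := x + 1) (by positivity)
      linarith
    · refine ⟨x + 1, by linarith, le_rfl, ?_⟩
      have := rpow_add_mul_sub_le_of_one_le hγ₁ (a := x + 1) (b := x) (by positivity) hx.le
      linarith
  have hy : 0 < y := hx.trans_le hxy
  have hmono : 0 ≤ (x + 1) ^ γ - x ^ γ :=
    sub_nonneg.2 (rpow_le_rpow hx.le (by linarith) hγ.le)
  calc (x + 1) ^ α * ((x + 1) ^ γ - x ^ γ) ^ p ≤ y ^ α * (γ * y ^ (γ - 1)) ^ p :=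
        mul_le_mul (rpow_le_rpow_of_nonpos hy hyx hα) (rpow_le_rpow hmono hstep hp)
          (by positivity) (by positivity)
    _ = γ ^ p * y ^ (α + (γ - 1) * p) := by
        rw [mul_rpow hγ.le (by positivity), ← rpow_mul hy.le, rpow_add hy]
        ring
    _ ≤ γ ^ p / x := by
        rw [hαγ, rpow_neg_one, ← div_eq_mul_inv]
        gcongr

theorem one_div_sub_le_rpow_mul_rpow {x r : ℝ} (hx : 0 < x) (hr : 0 ≤ r) :
    1 / (x + 1) - r * (1 / x - 1 / (x + 1)) ≤ (x + 1) ^ (-r - 1) * x ^ r := by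
  have hx₁ : 0 < x + 1 := by linarith
  have hbern := one_add_mul_sub_one_le_rpow_of_nonpos (x := (x + 1) / x) (r := -r) (by positivity)
    (by linarith)
  calc 1 / (x + 1) - r * (1 / x - 1 / (x + 1)) = (1 + -r * ((x + 1) / x - 1)) / (x + 1) := by
        field_simp; ring
    _ ≤ ((x + 1) / x) ^ (-r) / (x + 1) := by gcongr
    _ = (x + 1) ^ (-r - 1) * x ^ r := by
        rw [div_rpow hx₁.le hx.le, rpow_neg hx.le, rpow_sub_one hx₁.ne']
        field_simp

theorem harmonic_eq_sum_range (n : ℕ) :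
    (harmonic n : ℝ) = ∑ i ∈ range n, 1 / ((i : ℝ) + 1) := by
  simp [harmonic]

section CutoffPow

variable {γ : ℝ} {N : ℕ}

/- The two branches agree at `n = N`, and the truncated subtraction `2 * N - n` makes the
sequence vanish from `2 N` on. -/
noncomputable def cutoffPow (γ : ℝ) (N n : ℕ) : ℝ :=
  if n ≤ N then (n : ℝ) ^ γ else (N : ℝ) ^ (γ - 1) * ((2 * N - n : ℕ) : ℝ)

theorem cutoffPow_of_le {n : ℕ} (h : n ≤ N) : cutoffPow γ N n = (n : ℝ) ^ γ := if_pos h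

theorem cutoffPow_add (hN : N ≠ 0) (i : ℕ) :
    cutoffPow γ N (N + i) = (N : ℝ) ^ (γ - 1) * ((N - i : ℕ) : ℝ) := by
  rcases Nat.eq_zero_or_pos i with rfl | hi
  · rw [add_zero, cutoffPow_of_le le_rfl, Nat.sub_zero, rpow_sub_one (by positivity),
      div_mul_cancel₀ _ (by positivity)]
  · rw [cutoffPow, if_neg (by omega), show 2 * N - (N + i) = N - i by omega]

theorem cutoffPow_eq_zero (hN : N ≠ 0) {n : ℕ} (hn : 2 * N ≤ n) : cutoffPow γ N n = 0 := by
  obtain ⟨i, rfl⟩ := Nat.exists_eq_add_of_le (show N ≤ n by omega)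
  rw [cutoffPow_add hN, Nat.sub_eq_zero_of_le (by omega), Nat.cast_zero, mul_zero]

variable {p α : ℝ}

theorem sum_range_norm_sub_cutoffPow_le (hp : 0 ≤ p) (hα : α ≤ 0) (hγ : 0 < γ)
    (hαγ : α + (γ - 1) * p = -1) (hN : N ≠ 0) :
    ∑ n ∈ range N, ((n : ℝ) + 1) ^ α * ‖cutoffPow γ N (n + 1) - cutoffPow γ N n‖ ^ p ≤
      1 + γ ^ p * (1 + log N) := by
  obtain ⟨M, rfl⟩ : ∃ M, N = M + 1 := ⟨N - 1, by omega⟩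
  have hstep (i : ℕ) (hi : i ∈ range M) : (((i + 1 : ℕ) : ℝ) + 1) ^ α *
      ‖cutoffPow γ (M + 1) (i + 1 + 1) - cutoffPow γ (M + 1) (i + 1)‖ ^ p ≤
        γ ^ p * (1 / ((i : ℝ) + 1)) := by
    rw [mem_range] at hi
    rw [cutoffPow_of_le (by omega), cutoffPow_of_le (by omega), norm_eq_abs,
      abs_of_nonneg (sub_nonneg.2 (rpow_le_rpow (by positivity) (by push_cast; linarith) hγ.le)),
      mul_one_div]
    push_cast
    exact rpow_mul_rpow_sub_rpow_le (by positivity) hα hγ hp hαγ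
  have hfirst : (((0 : ℕ) : ℝ) + 1) ^ α *
      ‖cutoffPow γ (M + 1) (0 + 1) - cutoffPow γ (M + 1) 0‖ ^ p = 1 := by
    simp [cutoffPow_of_le, zero_rpow hγ.ne']
  have hlog : log M ≤ log ↑(M + 1) := by
    rcases M.eq_zero_or_pos with rfl | hM
    · simp
    · exact log_le_log (by positivity) (by push_cast; linarith)
  rw [sum_range_succ', hfirst]
  calc _ ≤ γ ^ p * ∑ i ∈ range M, 1 / ((i : ℝ) + 1) + 1 := by
        rw [mul_sum]
        exact add_le_add (sum_le_sum hstep) le_rfl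
    _ ≤ γ ^ p * (1 + log M) + 1 := by
        rw [← harmonic_eq_sum_range]
        gcongr
        exact harmonic_le_one_add_log M
    _ ≤ 1 + γ ^ p * (1 + log ↑(M + 1)) := by
        rw [add_comm _ (1 : ℝ)]
        gcongr

theorem sum_range_norm_sub_cutoffPow_add_le (hα : α ≤ 0) (hαγ : α + (γ - 1) * p = -1)
    (hN : N ≠ 0) :
    ∑ i ∈ range N, (((N + i : ℕ) : ℝ) + 1) ^ α *
      ‖cutoffPow γ N (N + i + 1) - cutoffPow γ N (N + i)‖ ^ p ≤ 1 := by
  have hN₀ : (0 : ℝ) < N := by positivity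
  have hstep (i : ℕ) (hi : i ∈ range N) : (((N + i : ℕ) : ℝ) + 1) ^ α *
      ‖cutoffPow γ N (N + i + 1) - cutoffPow γ N (N + i)‖ ^ p ≤ (N : ℝ)⁻¹ := by
    rw [mem_range] at hi
    have hdiff : cutoffPow γ N (N + i + 1) - cutoffPow γ N (N + i) = -(N : ℝ) ^ (γ - 1) := by
      rw [add_assoc, cutoffPow_add hN, cutoffPow_add hN, Nat.cast_sub (by omega),
        Nat.cast_sub hi.le]
      push_cast
      ring
    rw [hdiff, norm_neg, norm_of_nonneg (by positivity)]
    calc (((N + i : ℕ) : ℝ) + 1) ^ α * ((N : ℝ) ^ (γ - 1)) ^ p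
        ≤ (N : ℝ) ^ α * ((N : ℝ) ^ (γ - 1)) ^ p := by
          refine mul_le_mul_of_nonneg_right ?_ (by positivity)
          exact rpow_le_rpow_of_nonpos hN₀ (by push_cast; linarith) hα
      _ = (N : ℝ)⁻¹ := by
          rw [← rpow_mul hN₀.le, ← rpow_add hN₀, hαγ, rpow_neg_one]
  calc _ ≤ ∑ i ∈ range N, (N : ℝ)⁻¹ := sum_le_sum hstep
    _ = 1 := by simp [hN₀.ne']

theorem gradEnergy_cutoffPow_le (hp : 0 < p) (hα : α ≤ 0) (hγ : 0 < γ)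
    (hαγ : α + (γ - 1) * p = -1) (hN : N ≠ 0) :
    gradEnergy p α (cutoffPow γ N) ≤ γ ^ p * log N + (2 + γ ^ p) := by
  rw [gradEnergy_eq_sum hp.ne' (N := N + N) fun n hn ↦ cutoffPow_eq_zero hN (by omega),
    sum_range_add]
  linarith [sum_range_norm_sub_cutoffPow_le hp.le hα hγ hαγ hN,
    sum_range_norm_sub_cutoffPow_add_le hα hαγ hN]

theorem log_sub_le_weightedMass_cutoffPow (hp : 0 < p) (hγ : 0 < γ)
    (hαγ : α + (γ - 1) * p = -1) (hN : N ≠ 0) :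
    log N - (1 + γ * p) ≤ weightedMass p α (cutoffPow γ N) := by
  set g : ℕ → ℝ := fun n ↦ 1 / ((n : ℝ) + 1)
  have hterm (n : ℕ) (hn : n ∈ range N) : g (n + 1) - γ * p * (g n - g (n + 1)) ≤
      ((n : ℝ) + 2) ^ (α - p) * ‖cutoffPow γ N (n + 1)‖ ^ p := by
    rw [mem_range] at hn
    rw [cutoffPow_of_le (by omega), norm_of_nonneg (by positivity), ← rpow_mul (by positivity),
      show α - p = -(γ * p) - 1 by linarith, show (n : ℝ) + 2 = n + 1 + 1 by ring]
    simp only [g]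
    push_cast
    exact one_div_sub_le_rpow_mul_rpow (by positivity) (by positivity)
  have hharm : log N - 1 ≤ ∑ n ∈ range N, g (n + 1) := by
    have := log_add_one_le_harmonic (N + 1)
    rw [harmonic_eq_sum_range, sum_range_succ'] at this
    have hlog : log N ≤ log ↑(N + 1 + 1) := log_le_log (by positivity) (by push_cast; linarith)
    simp only [g]
    push_cast at this hlog ⊢
    simp only [zero_add, div_one] at this
    linarith
  have htel : ∑ n ∈ range N, (g n - g (n + 1)) ≤ 1 := by
    rw [sum_range_sub']
    simp [g]
    positivity
  rw [weightedMass_eq_sum hp.ne' (N := 2 * N) fun n hn ↦ cutoffPow_eq_zero hN hn]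
  calc log N - (1 + γ * p)
      ≤ ∑ n ∈ range N, g (n + 1) - γ * p * ∑ n ∈ range N, (g n - g (n + 1)) := by
        nlinarith [mul_le_mul_of_nonneg_left htel (by positivity : 0 ≤ γ * p)]
    _ = ∑ n ∈ range N, (g (n + 1) - γ * p * (g n - g (n + 1))) := by
        rw [mul_sum, ← sum_sub_distrib]
    _ ≤ ∑ n ∈ range N, ((n : ℝ) + 2) ^ (α - p) * ‖cutoffPow γ N (n + 1)‖ ^ p := sum_le_sum hterm
    _ ≤ _ := sum_le_sum_of_subset_of_nonneg (range_subset_range.2 (by omega))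
        fun n _ _ ↦ by positivity

end CutoffPow

theorem eventually_div_sub_lt {C A B w : ℝ} (hw : C < w) :
    ∀ᶠ L in atTop, B < L ∧ (C * L + A) / (L - B) < w := by
  filter_upwards [eventually_gt_atTop B, eventually_gt_atTop ((A + w * B) / (w - C))]
    with L hB hL
  refine ⟨hB, ?_⟩
  rw [div_lt_iff₀ (sub_pos.2 hB)]
  rw [div_lt_iff₀ (sub_pos.2 hw)] at hL
  linarith

theorem exists_cutoffPow_div_lt {p α γ w : ℝ} (hp : 0 < p) (hα : α ≤ 0) (hγ : 0 < γ)
    (hαγ : α + (γ - 1) * p = -1) (hw : γ ^ p < w) :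
    ∃ N ≠ 0, gradEnergy p α (fun n ↦ (cutoffPow γ N n : ℂ)) /
      weightedMass p α (fun n ↦ (cutoffPow γ N n : ℂ)) < w := by
  simp only [gradEnergy_ofReal, weightedMass_ofReal]
  obtain ⟨N, ⟨hlogN, hlt⟩, hN⟩ := (((tendsto_log_atTop.comp tendsto_natCast_atTop_atTop).eventually
    (eventually_div_sub_lt (A := 2 + γ ^ p) (B := 1 + γ * p) hw)).and (eventually_ne_atTop 0)).exists
  refine ⟨N, hN, lt_of_le_of_lt (div_le_div₀ ?_ (gradEnergy_cutoffPow_le hp hα hγ hαγ hN)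
    (sub_pos.2 hlogN) (log_sub_le_weightedMass_cutoffPow hp hγ hαγ hN)) hlt⟩
  have : 0 ≤ log N := by dsimp at hlogN; nlinarith [mul_pos hγ hp]
  positivity

theorem ofReal_cutoffPow_admissible {γ : ℝ} (hγ : 0 < γ) {N : ℕ} (hN : N ≠ 0) :
    (Function.support fun n ↦ (cutoffPow γ N n : ℂ)).Finite ∧ (cutoffPow γ N 0 : ℂ) = 0 ∧
      (fun n ↦ (cutoffPow γ N n : ℂ)) ≠ 0 := by
  refine ⟨(range (2 * N)).finite_toSet.subset fun n hn ↦ ?_, ?_, Function.ne_iff.2 ⟨1, ?_⟩⟩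
  · by_contra h
    exact hn (by simp [cutoffPow_eq_zero hN (by simpa using h)])
  · simp [cutoffPow_of_le, zero_rpow hγ.ne']
  · simp [cutoffPow_of_le (Nat.one_le_iff_ne_zero.2 hN)]

/-- Optimality of the constant in the weighted discrete p-Hardy inequality. -/
theorem weighted_p_Hardy_optimal (p α : ℝ) (hp : 1 < p) (hα : α < 0) :
    sInf {r : ℝ | ∃ u : ℕ → ℂ, (Function.support u).Finite ∧ u 0 = 0 ∧ u ≠ 0 ∧
        r = (∑' n : ℕ, ((n + 1 : ℕ) : ℝ) ^ α * ‖u (n + 1) - u n‖ ^ p) /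
            (∑' n : ℕ, ((n + 2 : ℕ) : ℝ) ^ (α - p) * ‖u (n + 1)‖ ^ p)} =
      ((p - α - 1) / p) ^ p := by
  set γ := (p - α - 1) / p with hγ_def
  have hγ : 0 < γ := div_pos (by linarith) (by linarith)
  have hαγ : α + (γ - 1) * p = -1 := by rw [hγ_def]; field_simp; ring
  apply csInf_eq_of_forall_ge_of_forall_gt_exists_lt
  · obtain ⟨hfin, h0, hne⟩ := ofReal_cutoffPow_admissible hγ one_ne_zero
    exact ⟨_, fun n ↦ (cutoffPow γ 1 n : ℂ), hfin, h0, hne, rfl⟩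
  · rintro r ⟨u, hu, h0, hne, rfl⟩
    exact (le_div_iff₀ (weightedMass_pos (by positivity) hu h0 hne)).2
      (hardy_inequality hp.le hγ hαγ hu h0)
  · intro w hw
    obtain ⟨N, hN, hlt⟩ := exists_cutoffPow_div_lt (by linarith) hα.le hγ hαγ hw
    obtain ⟨hfin, h0, hne⟩ := ofReal_cutoffPow_admissible hγ hN
    exact ⟨_, ⟨fun n ↦ (cutoffPow γ N n : ℂ), hfin, h0, hne, rfl⟩, hlt⟩
end

section
/- Let p > 1 be a real number. For every t ∈ [0,1] and every z ∈ ℂ, one has |z − t|^p ≥ (1 − t)^{p−1} (|z|^p − t). -/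
/-!
Write `x = ‖z‖`. By the triangle inequality `‖z - t‖ ≥ x - t`, so it suffices to bound
`(1 - t)^{p-1} (x^p - t)` by any `s ≥ max (x - t) 0` raised to the power `p`. If `x ≤ t` the left
side is nonpositive because `x^p ≤ x`. If `x > t`, write `x` as the convex combination
`t · 1 + (1 - t) · y` with `y = (x - t)/(1 - t)`; convexity of `u ↦ u^p` gives
`x^p ≤ t + (1 - t) y^p = t + (x - t)^p / (1 - t)^{p-1}`.
-/

open Real Set

variable {p t x s : ℝ}

lemma one_sub_rpow_mul_rpow_sub_le_rpow_sub (hp : 1 ≤ p) (ht0 : 0 ≤ t) (ht1 : t < 1)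
    (hx : t ≤ x) : (1 - t) ^ (p - 1) * (x ^ p - t) ≤ (x - t) ^ p := by
  have ha : 0 < 1 - t := sub_pos.mpr ht1
  set y := (x - t) / (1 - t)
  have hy : 0 ≤ y := div_nonneg (sub_nonneg.mpr hx) ha.le
  have hconvex : (t * 1 + (1 - t) * y) ^ p ≤ t * 1 ^ p + (1 - t) * y ^ p :=
    (convexOn_rpow hp).2 (mem_Ici.mpr zero_le_one) (mem_Ici.mpr hy) ht0 ha.le (by ring)
  have hcomb : t * 1 + (1 - t) * y = x := by
    simp only [y, mul_div_cancel₀ _ ha.ne']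
    ring
  have hpow : (1 - t) ^ (p - 1) * ((1 - t) * y ^ p) = (x - t) ^ p := by
    rw [div_rpow (sub_nonneg.mpr hx) ha.le, ← mul_assoc, ← rpow_add_one ha.ne', sub_add_cancel,
      mul_div_cancel₀ _ (rpow_pos_of_pos ha p).ne']
  rw [hcomb, one_rpow, mul_one] at hconvex
  calc (1 - t) ^ (p - 1) * (x ^ p - t)
      ≤ (1 - t) ^ (p - 1) * ((1 - t) * y ^ p) := by
        gcongr
        linarith
    _ = (x - t) ^ p := hpow

lemma one_sub_rpow_mul_rpow_sub_le (hp : 1 < p) (ht : t ∈ Icc 0 1) (hx : 0 ≤ x) (hs : 0 ≤ s)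
    (hxs : x - t ≤ s) : (1 - t) ^ (p - 1) * (x ^ p - t) ≤ s ^ p := by
  obtain ⟨ht0, ht1⟩ := ht
  rcases ht1.eq_or_lt with rfl | ht1
  · rw [sub_self, zero_rpow (sub_ne_zero.mpr hp.ne'), zero_mul]
    exact rpow_nonneg hs p
  rcases le_or_gt x t with hxt | htx
  · have hxp : x ^ p ≤ t := (rpow_le_self_of_le_one hx (hxt.trans ht1.le) hp.le).trans hxt
    exact (mul_nonpos_of_nonneg_of_nonpos (rpow_nonneg (sub_nonneg.mpr ht1.le) _)
      (sub_nonpos.mpr hxp)).trans (rpow_nonneg hs p)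
  · exact (one_sub_rpow_mul_rpow_sub_le_rpow_sub hp.le ht0 ht1 htx.le).trans
      (rpow_le_rpow (sub_nonneg.mpr htx.le) hxs (by linarith))

/-- Auxiliary pointwise inequality: `|z - t|^p ≥ (1 - t)^{p-1}(|z|^p - t)`. -/
theorem aux_pointwise_ineq (p : ℝ) (hp : 1 < p) (t : ℝ) (ht : t ∈ Set.Icc (0 : ℝ) 1) (z : ℂ) :
    ‖z - (t : ℂ)‖ ^ p ≥ (1 - t) ^ (p - 1) * (‖z‖ ^ p - t) := by
  have htriangle : ‖z‖ - t ≤ ‖z - (t : ℂ)‖ := by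
    simpa [abs_of_nonneg ht.1] using norm_sub_norm_le z (t : ℂ)
  exact one_sub_rpow_mul_rpow_sub_le hp ht (norm_nonneg z) (norm_nonneg _) htriangle
end

section
/- Let p > 1, let V : ℕ → ℝ satisfy V_n ≥ 0 for all n ≥ 1, and let g : ℕ → ℝ satisfy g_0 = 0, g_n > 0 for all n ≥ 1, and g_{n+1} ≥ g_n for all n ≥ 1. Then for every finitely supported sequence u : ℕ → ℂ with u_0 = 0, one has ∑_{n=1}^∞ V_n |u_n − u_{n−1}|^p ≥ − ∑_{n=1}^∞ [V_{n+1}(g_{n+1} − g_n)^{p−1} − V_n(g_n − g_{n−1})^{p−1}] · |u_n|^p / g_n^{p−1}. -/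
/-!
Write `F n = ‖u n‖ ^ p / g n ^ (p - 1)` and `W n = V (n + 1) * (g (n + 1) - g n) ^ (p - 1)`.
Since `F 0 = 0` and `F` has finite support, summation by parts turns the right-hand side into
`∑ W n * (F (n + 1) - F n)`, so it suffices to compare the two sums termwise. The termwise bound
comes from the convexity and homogeneity of the perspective `(x, s) ↦ x ^ p / s ^ (p - 1)`, which
makes it subadditive, combined with the triangle inequality `‖u (n + 1)‖ ≤ ‖u n‖ + ‖u (n + 1) - u n‖`.
-/

open Finset

namespace Real

variable {p : ℝ}

lemma mul_div_rpow_self {s x : ℝ} (hs : 0 < s) (hx : 0 ≤ x) :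
    s * (x / s) ^ p = x ^ p / s ^ (p - 1) := by
  have hsp : s ^ p ≠ 0 := (rpow_pos_of_pos hs p).ne'
  rw [div_rpow hx hs.le, rpow_sub_one hs.ne']
  field_simp

lemma add_rpow_div_add_rpow_le (hp : 1 ≤ p) {x y s t : ℝ} (hx : 0 ≤ x) (hy : 0 ≤ y)
    (hs : 0 < s) (ht : 0 < t) :
    (x + y) ^ p / (s + t) ^ (p - 1) ≤ x ^ p / s ^ (p - 1) + y ^ p / t ^ (p - 1) := by
  have hst : 0 < s + t := add_pos hs ht
  have hconv := (convexOn_rpow hp).2 (Set.mem_Ici.2 (div_nonneg hx hs.le))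
    (Set.mem_Ici.2 (div_nonneg hy ht.le)) (div_nonneg hs.le hst.le) (div_nonneg ht.le hst.le)
    (by field_simp)
  simp only [smul_eq_mul] at hconv
  calc (x + y) ^ p / (s + t) ^ (p - 1)
      = (s + t) * ((s / (s + t)) * (x / s) + (t / (s + t)) * (y / t)) ^ p := by
        rw [← mul_div_rpow_self hst (add_nonneg hx hy)]
        congr 2
        field_simp
    _ ≤ (s + t) * ((s / (s + t)) * (x / s) ^ p + (t / (s + t)) * (y / t) ^ p) := by gcongr
    _ = s * (x / s) ^ p + t * (y / t) ^ p := by field_simp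
    _ = x ^ p / s ^ (p - 1) + y ^ p / t ^ (p - 1) := by
        rw [mul_div_rpow_self hs hx, mul_div_rpow_self ht hy]

lemma rpow_sub_one_mul_rpow_div_sub_le (hp : 1 < p) {a b c s t : ℝ} (ha : 0 ≤ a) (hb : 0 ≤ b)
    (hc : 0 ≤ c) (habc : a ≤ b + c) (ht : 0 < t) (hts : t ≤ s) :
    (s - t) ^ (p - 1) * (a ^ p / s ^ (p - 1) - b ^ p / t ^ (p - 1)) ≤ c ^ p := by
  obtain rfl | hlt := hts.eq_or_lt
  · rw [sub_self, zero_rpow (by linarith), zero_mul]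
    exact rpow_nonneg hc p
  have hr : 0 < s - t := sub_pos.2 hlt
  have hrp : 0 < (s - t) ^ (p - 1) := rpow_pos_of_pos hr _
  have hsub : a ^ p / s ^ (p - 1) - b ^ p / t ^ (p - 1) ≤ c ^ p / (s - t) ^ (p - 1) := by
    have hmono : a ^ p / s ^ (p - 1) ≤ (b + c) ^ p / (t + (s - t)) ^ (p - 1) := by
      rw [add_sub_cancel]
      have hs : 0 < s := ht.trans hlt
      gcongr
    linarith [add_rpow_div_add_rpow_le hp.le hb hc ht hr]
  calc (s - t) ^ (p - 1) * (a ^ p / s ^ (p - 1) - b ^ p / t ^ (p - 1))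
      ≤ (s - t) ^ (p - 1) * (c ^ p / (s - t) ^ (p - 1)) := by gcongr
    _ = c ^ p := mul_div_cancel₀ _ hrp.ne'

end Real

lemma sum_range_mul_sub_eq_neg_sum {R : Type*} [CommRing R] (W F : ℕ → R) {N : ℕ}
    (hF0 : F 0 = 0) (hFN : F N = 0) :
    ∑ n ∈ range N, W n * (F (n + 1) - F n) = -∑ n ∈ range N, (W (n + 1) - W n) * F (n + 1) := by
  rw [eq_neg_iff_add_eq_zero, ← sum_add_distrib]
  calc ∑ n ∈ range N, (W n * (F (n + 1) - F n) + (W (n + 1) - W n) * F (n + 1))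
      = ∑ n ∈ range N, (W (n + 1) * F (n + 1) - W n * F n) := by
        refine sum_congr rfl fun n _ => ?_
        ring
    _ = 0 := by rw [sum_range_sub (fun n => W n * F n), hF0, hFN, mul_zero, mul_zero, sub_zero]

lemma exists_forall_ge_eq_zero_of_finite_support {M : Type*} [Zero M] {u : ℕ → M}
    (hfin : (Function.support u).Finite) : ∃ N, ∀ n, N ≤ n → u n = 0 := by
  obtain ⟨M, hM⟩ := hfin.bddAbove
  exact ⟨M + 1, fun n hn => Function.notMem_support.1 fun hu => by have := hM hu; omega⟩

lemma rpow_sub_one_mul_norm_rpow_div_sub_le {E : Type*} [SeminormedAddCommGroup E] {p : ℝ}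
    (hp : 1 < p) {g : ℕ → ℝ} (hg0 : g 0 = 0) (hgpos : ∀ n, 1 ≤ n → 0 < g n)
    (hgmono : ∀ n, 1 ≤ n → g n ≤ g (n + 1)) {u : ℕ → E} (h0 : u 0 = 0) (n : ℕ) :
    (g (n + 1) - g n) ^ (p - 1) *
        (‖u (n + 1)‖ ^ p / g (n + 1) ^ (p - 1) - ‖u n‖ ^ p / g n ^ (p - 1)) ≤
      ‖u (n + 1) - u n‖ ^ p := by
  cases n with
  | zero =>
    have hg1 : g 1 ^ (p - 1) ≠ 0 := (Real.rpow_pos_of_pos (hgpos 1 le_rfl) _).ne'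
    simp only [zero_add, hg0, h0, sub_zero, norm_zero, Real.zero_rpow (by linarith : p ≠ 0),
      zero_div]
    rw [mul_div_cancel₀ _ hg1]
  | succ m =>
    exact Real.rpow_sub_one_mul_rpow_div_sub_le hp (norm_nonneg _) (norm_nonneg _)
      (norm_nonneg _) (norm_le_norm_add_norm_sub' _ _) (hgpos (m + 1) (by omega))
      (hgmono (m + 1) (by omega))

/-- Abstract weighted discrete p-Hardy inequality. -/
theorem abstract_weighted_p_Hardy (p : ℝ) (hp : 1 < p) (V g : ℕ → ℝ)
    (hV : ∀ n, 1 ≤ n → 0 ≤ V n) (hg0 : g 0 = 0) (hgpos : ∀ n, 1 ≤ n → 0 < g n)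
    (hgmono : ∀ n, 1 ≤ n → g n ≤ g (n + 1))
    (u : ℕ → ℂ) (hfin : (Function.support u).Finite) (h0 : u 0 = 0) :
    ∑' n : ℕ, V (n + 1) * ‖u (n + 1) - u n‖ ^ p ≥
      - ∑' n : ℕ,
          (V (n + 2) * (g (n + 2) - g (n + 1)) ^ (p - 1) -
            V (n + 1) * (g (n + 1) - g n) ^ (p - 1)) *
          ‖u (n + 1)‖ ^ p / g (n + 1) ^ (p - 1) := by
  have hp0 : p ≠ 0 := by linarith
  obtain ⟨N, hN⟩ := exists_forall_ge_eq_zero_of_finite_support hfin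
  set F : ℕ → ℝ := fun n => ‖u n‖ ^ p / g n ^ (p - 1)
  set W : ℕ → ℝ := fun n => V (n + 1) * (g (n + 1) - g n) ^ (p - 1)
  have hF : ∀ n, N ≤ n → F n = 0 := fun n hn => by simp [F, hN n hn, Real.zero_rpow hp0]
  rw [tsum_eq_sum (s := range N) fun n hn => by
        simp [hN n (by simpa using hn), hN (n + 1) (by simp at hn; omega), Real.zero_rpow hp0],
    tsum_eq_sum (s := range N) fun n hn => by
        simp [hN (n + 1) (by simp at hn; omega), Real.zero_rpow hp0]]
  calc -∑ n ∈ range N, (W (n + 1) - W n) * ‖u (n + 1)‖ ^ p / g (n + 1) ^ (p - 1)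
      = ∑ n ∈ range N, W n * (F (n + 1) - F n) := by
        rw [sum_range_mul_sub_eq_neg_sum W F (by simp [F, h0, Real.zero_rpow hp0]) (hF N le_rfl)]
        simp only [F, mul_div_assoc]
    _ ≤ ∑ n ∈ range N, V (n + 1) * ‖u (n + 1) - u n‖ ^ p := by
        refine sum_le_sum fun n _ => ?_
        rw [mul_assoc]
        exact mul_le_mul_of_nonneg_left
          (rpow_sub_one_mul_norm_rpow_div_sub_le hp hg0 hgpos hgmono h0 n) (hV _ (by omega))
end

section
/- Let p > 1, let g : ℕ → ℝ satisfy g_0 = 0, g_n > 0 for all n ≥ 1, and g_{n+1} ≥ g_n for all n ≥ 1, and let u : ℕ → ℂ satisfy u_0 = 0. Then for every n ≥ 1, |u_n − u_{n−1}|^p ≥ (|u_n|^p / g_n^{p−1} − |u_{n−1}|^p / g_{n−1}^{p−1}) · (g_n − g_{n−1})^{p−1}, where for n = 1 the term |u_0|^p / g_0^{p−1} is interpreted as 0. -/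
/-!
The map `(x, s) ↦ x ^ p / s ^ (p - 1)` is the perspective of the convex function `x ↦ x ^ p`,
hence jointly convex and positively homogeneous, hence subadditive (Radon's inequality).
Applied to `(|a - b|, A - B) + (b, B)` with `a = ‖u n‖`, `b = ‖u (n - 1)‖`, `A = g n`,
`B = g (n - 1)`, this bounds `a ^ p / A ^ (p - 1) - b ^ p / B ^ (p - 1)` by
`|a - b| ^ p / (A - B) ^ (p - 1)`, and `|a - b| ≤ ‖u n - u (n - 1)‖`.
-/

open Real

theorem add_rpow_div_add_rpow_sub_one_le {p x y s t : ℝ} (hp : 1 ≤ p) (hx : 0 ≤ x)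
    (hy : 0 ≤ y) (hs : 0 < s) (ht : 0 < t) :
    (x + y) ^ p / (s + t) ^ (p - 1) ≤ x ^ p / s ^ (p - 1) + y ^ p / t ^ (p - 1) := by
  have hst : 0 < s + t := add_pos hs ht
  have perspective (z w : ℝ) (hz : 0 ≤ z) (hw : 0 < w) :
      z ^ p / w ^ (p - 1) = w * (z / w) ^ p := by
    rw [div_rpow hz hw.le, rpow_sub_one hw.ne']
    field_simp
  have hconv :
      ((x + y) / (s + t)) ^ p ≤ s / (s + t) * (x / s) ^ p + t / (s + t) * (y / t) ^ p := by
    have hmean : s / (s + t) * (x / s) + t / (s + t) * (y / t) = (x + y) / (s + t) := by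
      field_simp
    simpa only [smul_eq_mul, hmean] using
      (convexOn_rpow hp).2 (Set.mem_Ici.2 (div_nonneg hx hs.le))
        (Set.mem_Ici.2 (div_nonneg hy ht.le)) (div_nonneg hs.le hst.le) (div_nonneg ht.le hst.le)
        (by field_simp)
  rw [perspective _ _ (add_nonneg hx hy) hst, perspective _ _ hx hs, perspective _ _ hy ht]
  calc (s + t) * ((x + y) / (s + t)) ^ p
      ≤ (s + t) * (s / (s + t) * (x / s) ^ p + t / (s + t) * (y / t) ^ p) :=
        mul_le_mul_of_nonneg_left hconv hst.le
    _ = s * (x / s) ^ p + t * (y / t) ^ p := by field_simp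

theorem div_rpow_sub_div_rpow_le {p a b A B : ℝ} (hp : 1 ≤ p) (ha : 0 ≤ a) (hb : 0 ≤ b)
    (hB : 0 < B) (hBA : B < A) :
    a ^ p / A ^ (p - 1) - b ^ p / B ^ (p - 1) ≤ |a - b| ^ p / (A - B) ^ (p - 1) := by
  have hA : 0 < A := hB.trans hBA
  have ha_le : a ^ p ≤ (|a - b| + b) ^ p :=
    rpow_le_rpow ha (by linarith [le_abs_self (a - b)]) (by linarith)
  have radon := add_rpow_div_add_rpow_sub_one_le hp (abs_nonneg (a - b)) hb (sub_pos.2 hBA) hB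
  rw [sub_add_cancel] at radon
  have ha_div := div_le_div_of_nonneg_right ha_le (rpow_pos_of_pos hA (p - 1)).le
  linarith

theorem div_rpow_sub_div_rpow_mul_le {p a b A B : ℝ} (hp : 1 < p) (ha : 0 ≤ a) (hb : 0 ≤ b)
    (hB : 0 < B) (hBA : B ≤ A) :
    (a ^ p / A ^ (p - 1) - b ^ p / B ^ (p - 1)) * (A - B) ^ (p - 1) ≤ |a - b| ^ p := by
  obtain rfl | hlt := hBA.eq_or_lt
  · rw [sub_self, zero_rpow (by linarith), mul_zero]
    exact rpow_nonneg (abs_nonneg _) p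
  · have hpos : 0 < (A - B) ^ (p - 1) := rpow_pos_of_pos (sub_pos.2 hlt) _
    rw [← le_div_iff₀ hpos]
    exact div_rpow_sub_div_rpow_le hp.le ha hb hB hlt

/-- Pointwise key inequality in the proof of the abstract weighted p-Hardy inequality.
For `n = 1` the term `|u 0|^p / g 0 ^ (p-1)` equals `0` since `u 0 = 0` and `p > 0`
(so `|u 0|^p = 0` and the quotient vanishes), matching the stated interpretation. -/
theorem pointwise_key_ineq (p : ℝ) (hp : 1 < p) (g : ℕ → ℝ) (hg0 : g 0 = 0)
    (hgpos : ∀ n, 1 ≤ n → 0 < g n) (hgmono : ∀ n, 1 ≤ n → g n ≤ g (n + 1))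
    (u : ℕ → ℂ) (h0 : u 0 = 0) (n : ℕ) (hn : 1 ≤ n) :
    ‖u n - u (n - 1)‖ ^ p ≥
      (‖u n‖ ^ p / g n ^ (p - 1) -
        ‖u (n - 1)‖ ^ p / g (n - 1) ^ (p - 1)) *
        (g n - g (n - 1)) ^ (p - 1) := by
  obtain rfl | hn2 := hn.eq_or_lt
  · have hg1 : g 1 ^ (p - 1) ≠ 0 := (rpow_pos_of_pos (hgpos 1 le_rfl) _).ne'
    simp [h0, hg0, zero_rpow (by linarith : p ≠ 0), hg1]
  · have hB : 0 < g (n - 1) := hgpos (n - 1) (by omega)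
    have hBA : g (n - 1) ≤ g n := by
      simpa [Nat.sub_add_cancel hn] using hgmono (n - 1) (by omega)
    calc _ ≤ |‖u n‖ - ‖u (n - 1)‖| ^ p :=
          div_rpow_sub_div_rpow_mul_le hp (norm_nonneg _) (norm_nonneg _) hB hBA
      _ ≤ ‖u n - u (n - 1)‖ ^ p :=
          rpow_le_rpow (abs_nonneg _) (abs_norm_sub_norm_le _ _) (by linarith)
end

section
/- Let ℓ ≥ 1 be an integer and 1 < p < ∞. Define the generalized discrete Hardy operator H^{(ℓ)} acting on sequences v : {1,2,3,…} → ℂ by (H^{(ℓ)} v)_n = (n+ℓ−1)^{−ℓ} ∑_{k=1}^{n} C(n+ℓ−1−k, ℓ−1) v_k. Then H^{(ℓ)} is a bounded operator on ℓ^p(ℕ) with operator norm at most 1/((1 − 1/p)_ℓ), i.e., for every v ∈ ℓ^p(ℕ), ∑_{n=1}^∞ |(H^{(ℓ)} v)_n|^p ≤ (1/((1 − 1/p)_ℓ))^p ∑_{n=1}^∞ |v_n|^p. -/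
/-- Pochhammer symbol `(a)_ℓ = a(a+1)⋯(a+ℓ-1)`. -/
noncomputable def poch (a : ℝ) (l : ℕ) : ℝ := ∏ i ∈ Finset.range l, (a + i)

/-- The generalized discrete Hardy operator. The sequence `v : ℕ → ℂ` represents a sequence
indexed by the positive integers via `v_k = v (k - 1)`, i.e. index `n : ℕ` stands for the
positive integer `n + 1`. Thus `(Hop l v) n = (n+l)^{-l} ∑_{k=0}^{n} C(n+l-1-k, l-1) v k`,
which is `(H^{(ℓ)}v)_{n+1} = (n+1+ℓ-1)^{-ℓ} ∑_{k=1}^{n+1} C(n+1+ℓ-1-k, ℓ-1) v_k`. -/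
noncomputable def Hop (l : ℕ) (v : ℕ → ℂ) : ℕ → ℂ := fun n =>
  (((n + l : ℕ) : ℂ) ^ l)⁻¹ *
    ∑ k ∈ Finset.range (n + 1), ((n + l - 1 - k).choose (l - 1) : ℂ) * v k

/-!
Write `W_L u n = (n + L)^{-(L+1)} ∑_{m<n} (m + L)^L u m`. By the hockey-stick identity,
`H^{(L+1)} u n = W_L (H^{(L)} u) (n + 1)` with `H^{(0)} = id`, so it suffices to bound the shifted
`W_L` on `ℓ^p` by `1 / (L + 1 - 1/p) = 1 / (1 - 1/p + L)`: these constants multiply to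
`1 / (1 - 1/p)_ℓ`. For `W_L` this is the telescoping proof of Hardy's inequality. From
`(n+L)^L u n = (n+L+1)^{L+1} W(n+1) - (n+L)^{L+1} W(n)`, Young's inequality and
`(x+1)^{L+1} ≥ x^{L+1} + (L+1) x^L` give
`(L + 1 - 1/p) W(n+1)^p ≤ W(n+1)^{p-1} u n + f n - f (n+1)` with `f n = (n+L) W(n)^p / p ≥ 0`,
and Hölder's inequality turns the summed inequality into the `ℓ^p` bound.
-/

open Finset Real

lemma poch_succ (a : ℝ) (l : ℕ) : poch a (l + 1) = poch a l * (a + l) :=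
  prod_range_succ _ _

lemma poch_pos {a : ℝ} (ha : 0 < a) (l : ℕ) : 0 < poch a l :=
  prod_pos fun i _ => by positivity

lemma rpow_sub_one_mul_le {p a b : ℝ} (hp : 1 ≤ p) (ha : 0 ≤ a) (hb : 0 ≤ b) :
    a ^ (p - 1) * b ≤ (1 - 1 / p) * a ^ p + 1 / p * b ^ p := by
  have hp0 : p ≠ 0 := by positivity
  have hw : 0 ≤ 1 - 1 / p := by
    rw [sub_nonneg, div_le_one (by positivity)]; exact hp
  convert geom_mean_le_arith_mean2_weighted hw (by positivity) (rpow_nonneg ha p)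
    (rpow_nonneg hb p) (sub_add_cancel 1 (1 / p)) using 2
  · rw [← rpow_mul ha, mul_one_sub, mul_one_div_cancel hp0]
  · rw [← rpow_mul hb, mul_one_div_cancel hp0, rpow_one]

lemma pow_succ_add_mul_pow_le_add_one_pow {x : ℝ} (hx : 0 ≤ x) (L : ℕ) :
    x ^ (L + 1) + (L + 1) * x ^ L ≤ (x + 1) ^ (L + 1) := by
  induction L with
  | zero => simp
  | succ L ih =>
    have := mul_le_mul_of_nonneg_left ih (by positivity : 0 ≤ x + 1)
    have h0 : 0 ≤ ((L : ℝ) + 1) * x ^ L := by positivity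
    push_cast
    linear_combination this + h0

lemma mul_rpow_le_of_pow_mul_eq {p x a b u : ℝ} (L : ℕ) (hp : 1 < p) (hx : 0 ≤ x) (ha : 0 ≤ a)
    (hb : 0 ≤ b) (hxL : 0 < x ^ L) (h : x ^ L * u = (x + 1) ^ (L + 1) * a - x ^ (L + 1) * b) :
    ((L : ℝ) + 1 - 1 / p) * a ^ p ≤ a ^ (p - 1) * u + (x * b ^ p - (x + 1) * a ^ p) / p := by
  have hp0 : p ≠ 0 := by positivity
  have hpow : a ^ (p - 1) * a = a ^ p := by
    rw [← rpow_add_one' ha (by simpa using hp0), sub_add_cancel]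
  have young := mul_le_mul_of_nonneg_left (rpow_sub_one_mul_le hp.le ha hb)
    (pow_nonneg hx (L + 1))
  have binom := mul_le_mul_of_nonneg_right (pow_succ_add_mul_pow_le_add_one_pow hx L)
    (rpow_nonneg ha p)
  rw [← mul_le_mul_iff_right₀ hxL]
  linear_combination young + binom - a ^ (p - 1) * h - (x + 1) ^ (L + 1) * hpow

lemma sum_rpow_le_of_mul_sum_rpow_le_sum_mul {ι : Type*} (s : Finset ι) {a b : ι → ℝ} {p c : ℝ}
    (hp : 1 < p) (hc : 0 < c) (ha : ∀ i ∈ s, 0 ≤ a i) (hb : ∀ i ∈ s, 0 ≤ b i)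
    (h : c * ∑ i ∈ s, a i ^ p ≤ ∑ i ∈ s, a i ^ (p - 1) * b i) :
    ∑ i ∈ s, a i ^ p ≤ (1 / c) ^ p * ∑ i ∈ s, b i ^ p := by
  set S := ∑ i ∈ s, a i ^ p
  set T := ∑ i ∈ s, b i ^ p
  have hp0 : 0 < p := by linarith
  have hpq := HolderConjugate.conjExponent hp
  set q := p.conjExponent
  have holder : c * S ≤ S ^ (1 / q) * T ^ (1 / p) := by
    refine h.trans ((inner_le_Lp_mul_Lq_of_nonneg s hpq.symm
      (fun i hi => rpow_nonneg (ha i hi) _) hb).trans_eq ?_)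
    congr 2
    refine sum_congr rfl fun i hi => ?_
    rw [← rpow_mul (ha i hi), hpq.sub_one_mul_conj]
  have hS0 : 0 ≤ S := sum_nonneg fun i hi => rpow_nonneg (ha i hi) p
  have hT : 0 ≤ T := sum_nonneg fun i hi => rpow_nonneg (hb i hi) p
  rcases hS0.eq_or_lt with hS | hS
  · rw [← hS]
    exact mul_nonneg (by positivity) hT
  have hroot : c * S ^ (1 / p) ≤ T ^ (1 / p) := by
    refine le_of_mul_le_mul_left ?_ (rpow_pos_of_pos hS (1 / q))
    calc S ^ (1 / q) * (c * S ^ (1 / p)) = c * S ^ (1 / q + 1 / p) := by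
          rw [rpow_add hS]; ring
      _ = c * S := by rw [one_div, one_div, hpq.symm.inv_add_inv_eq_one, rpow_one]
      _ ≤ S ^ (1 / q) * T ^ (1 / p) := holder
  have hpow := rpow_le_rpow (by positivity) hroot hp0.le
  rw [mul_rpow hc.le (by positivity), ← rpow_mul hS.le, ← rpow_mul hT, one_div_mul_cancel hp0.ne',
    rpow_one, rpow_one] at hpow
  rw [div_rpow zero_le_one hc.le, one_rpow, div_mul_eq_mul_div, one_mul,
    le_div_iff₀ (rpow_pos_of_pos hc p)]
  linarith

noncomputable def weightedHardy (L : ℕ) (u : ℕ → ℝ) (n : ℕ) : ℝ :=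
  (∑ m ∈ range n, ((m : ℝ) + L) ^ L * u m) / ((n : ℝ) + L) ^ (L + 1)

namespace weightedHardy

variable {L : ℕ} {u : ℕ → ℝ}

lemma nonneg (hu : ∀ n, 0 ≤ u n) (n : ℕ) : 0 ≤ weightedHardy L u n :=
  div_nonneg (sum_nonneg fun m _ => mul_nonneg (by positivity) (hu m)) (by positivity)

@[simp] lemma apply_zero : weightedHardy L u 0 = 0 := by
  simp [weightedHardy]

lemma pow_mul_eq_sum (n : ℕ) :
    ((n : ℝ) + L) ^ (L + 1) * weightedHardy L u n = ∑ m ∈ range n, ((m : ℝ) + L) ^ L * u m := by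
  rcases n.eq_zero_or_pos with rfl | hn
  · simp
  · exact mul_div_cancel₀ _ (by positivity)

lemma pow_mul_sub_pow_mul (n : ℕ) :
    ((n : ℝ) + L) ^ L * u n = ((n : ℝ) + L + 1) ^ (L + 1) * weightedHardy L u (n + 1)
      - ((n : ℝ) + L) ^ (L + 1) * weightedHardy L u n := by
  rw [pow_mul_eq_sum, add_right_comm, ← Nat.cast_add_one, pow_mul_eq_sum, sum_range_succ]
  ring

variable {p : ℝ}

lemma mul_rpow_le_telescoping (hp : 1 < p) (hu : ∀ n, 0 ≤ u n) (n : ℕ) :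
    ((L : ℝ) + 1 - 1 / p) * weightedHardy L u (n + 1) ^ p ≤
      weightedHardy L u (n + 1) ^ (p - 1) * u n +
        (((n : ℝ) + L) * weightedHardy L u n ^ p
          - ((n : ℝ) + L + 1) * weightedHardy L u (n + 1) ^ p) / p := by
  have hxL : 0 < ((n : ℝ) + L) ^ L := by
    rcases L.eq_zero_or_pos with rfl | hL
    · simp
    · positivity
  exact mul_rpow_le_of_pow_mul_eq L hp (by positivity) (nonneg hu (n + 1)) (nonneg hu n) hxL
    (pow_mul_sub_pow_mul n)

lemma mul_sum_rpow_le_sum_mul (hp : 1 < p) (hu : ∀ n, 0 ≤ u n) (N : ℕ) :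
    ((L : ℝ) + 1 - 1 / p) * ∑ n ∈ range N, weightedHardy L u (n + 1) ^ p ≤
      ∑ n ∈ range N, weightedHardy L u (n + 1) ^ (p - 1) * u n := by
  set f : ℕ → ℝ := fun n => ((n : ℝ) + L) * weightedHardy L u n ^ p / p
  have hf0 : f 0 = 0 := by simp [f, zero_rpow (by positivity : p ≠ 0)]
  have hfN : 0 ≤ f N := div_nonneg (mul_nonneg (by positivity) (rpow_nonneg (nonneg hu N) p))
    (by positivity)
  calc ((L : ℝ) + 1 - 1 / p) * ∑ n ∈ range N, weightedHardy L u (n + 1) ^ p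
      ≤ ∑ n ∈ range N, (weightedHardy L u (n + 1) ^ (p - 1) * u n + (f n - f (n + 1))) := by
        rw [mul_sum]
        refine sum_le_sum fun n _ => ?_
        refine (mul_rpow_le_telescoping hp hu n).trans_eq ?_
        simp only [f]
        push_cast
        ring
    _ = ∑ n ∈ range N, weightedHardy L u (n + 1) ^ (p - 1) * u n - f N := by
        rw [sum_add_distrib, sum_range_sub', hf0]
        ring
    _ ≤ ∑ n ∈ range N, weightedHardy L u (n + 1) ^ (p - 1) * u n := by linarith

lemma sum_rpow_le (hp : 1 < p) (hu : ∀ n, 0 ≤ u n) (N : ℕ) :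
    ∑ n ∈ range N, weightedHardy L u (n + 1) ^ p ≤
      (1 / ((L : ℝ) + 1 - 1 / p)) ^ p * ∑ n ∈ range N, u n ^ p := by
  have hc : 0 < (L : ℝ) + 1 - 1 / p := by
    have : 1 / p < 1 := (div_lt_one (by linarith)).2 hp
    linarith [(L.cast_nonneg : (0 : ℝ) ≤ L)]
  exact sum_rpow_le_of_mul_sum_rpow_le_sum_mul _ hp hc (fun n _ => nonneg hu (n + 1))
    (fun n _ => hu n) (mul_sum_rpow_le_sum_mul hp hu N)

end weightedHardy

lemma sum_range_sum_range_sub_mul {R : Type*} [CommSemiring R] (c u : ℕ → R) (n : ℕ) :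
    ∑ m ∈ range (n + 1), ∑ k ∈ range (m + 1), c (m - k) * u k =
      ∑ k ∈ range (n + 1), (∑ j ∈ range (n - k + 1), c j) * u k := by
  rw [sum_comm' (t' := range (n + 1)) (s' := fun k => Ico k (n + 1))]
  · refine sum_congr rfl fun k hk => ?_
    rw [← sum_mul, sum_Ico_eq_sum_range, Nat.sub_add_comm (mem_range_succ_iff.1 hk)]
    simp only [add_tsub_cancel_left]
  · intro m k
    simp only [mem_range, mem_Ico]
    omega

noncomputable def iteratedHardy : ℕ → (ℕ → ℝ) → ℕ → ℝ
  | 0, u => u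
  | l + 1, u => fun n => weightedHardy l (iteratedHardy l u) (n + 1)

namespace iteratedHardy

lemma nonneg {u : ℕ → ℝ} (hu : ∀ n, 0 ≤ u n) : ∀ l n, 0 ≤ iteratedHardy l u n
  | 0, n => hu n
  | l + 1, n => weightedHardy.nonneg (nonneg hu l) (n + 1)

lemma succ_apply (L : ℕ) (u : ℕ → ℝ) (n : ℕ) :
    iteratedHardy (L + 1) u n =
      (∑ k ∈ range (n + 1), ((n - k + L).choose L : ℝ) * u k) / ((n : ℝ) + L + 1) ^ (L + 1) := by
  induction L generalizing n with
  | zero => simp [iteratedHardy, weightedHardy, add_comm]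
  | succ L ih =>
    have hcollapse (m : ℕ) : ((m : ℝ) + (L + 1 : ℕ)) ^ (L + 1) * iteratedHardy (L + 1) u m =
        ∑ k ∈ range (m + 1), ((m - k + L).choose L : ℝ) * u k := by
      rw [ih, Nat.cast_succ, ← add_assoc]
      exact mul_div_cancel₀ _ (by positivity)
    change weightedHardy (L + 1) (iteratedHardy (L + 1) u) (n + 1) = _
    rw [weightedHardy, sum_congr rfl fun m _ => hcollapse m,
      sum_range_sum_range_sub_mul (fun j => ((j + L).choose L : ℝ))]
    simp_rw [← Nat.cast_sum, Nat.sum_range_add_choose]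
    congr 1
    push_cast
    ring

lemma sum_rpow_le {p : ℝ} (hp : 1 < p) {u : ℕ → ℝ} (hu : ∀ n, 0 ≤ u n) (l N : ℕ) :
    ∑ n ∈ range N, iteratedHardy l u n ^ p ≤
      (1 / poch (1 - 1 / p) l) ^ p * ∑ n ∈ range N, u n ^ p := by
  induction l with
  | zero => simp [iteratedHardy, poch]
  | succ l ih =>
    have ha : 0 < 1 - 1 / p := by
      rw [sub_pos, div_lt_one (by linarith)]; exact hp
    have hc : 0 < (l : ℝ) + 1 - 1 / p := by linarith [(l.cast_nonneg : (0 : ℝ) ≤ l)]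
    calc ∑ n ∈ range N, iteratedHardy (l + 1) u n ^ p
        ≤ (1 / ((l : ℝ) + 1 - 1 / p)) ^ p * ∑ n ∈ range N, iteratedHardy l u n ^ p :=
          weightedHardy.sum_rpow_le hp (nonneg hu l) N
      _ ≤ (1 / ((l : ℝ) + 1 - 1 / p)) ^ p * ((1 / poch (1 - 1 / p) l) ^ p *
            ∑ n ∈ range N, u n ^ p) := by have := hc.le; gcongr
      _ = (1 / poch (1 - 1 / p) (l + 1)) ^ p * ∑ n ∈ range N, u n ^ p := by
          have := poch_pos ha l
          rw [← mul_assoc, ← mul_rpow (by positivity) (by positivity), poch_succ]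
          congr 2
          field_simp
          ring

end iteratedHardy

lemma norm_Hop_le (L : ℕ) (v : ℕ → ℂ) (n : ℕ) :
    ‖Hop (L + 1) v n‖ ≤ iteratedHardy (L + 1) (fun k => ‖v k‖) n := by
  have hden : ((n + (L + 1) : ℕ) : ℝ) = n + L + 1 := by push_cast; ring
  rw [iteratedHardy.succ_apply, Hop, norm_mul, norm_inv, norm_pow, Complex.norm_natCast, hden,
    inv_mul_eq_div]
  gcongr
  refine (norm_sum_le _ _).trans_eq (sum_congr rfl fun k hk => ?_)
  have hk : n + (L + 1) - 1 - k = n - k + L := by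
    have := mem_range_succ_iff.1 hk
    omega
  rw [norm_mul, hk, Nat.add_sub_cancel, Complex.norm_natCast]

lemma summable_and_tsum_le_mul_tsum_of_sum_range_le {f g : ℕ → ℝ} {C : ℝ} (hf : ∀ n, 0 ≤ f n)
    (hg : ∀ n, 0 ≤ g n) (hgs : Summable g) (hC : 0 ≤ C)
    (h : ∀ N, ∑ n ∈ range N, f n ≤ C * ∑ n ∈ range N, g n) :
    Summable f ∧ ∑' n, f n ≤ C * ∑' n, g n := by
  have h' (N : ℕ) : ∑ n ∈ range N, f n ≤ C * ∑' n, g n :=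
    (h N).trans (mul_le_mul_of_nonneg_left (hgs.sum_le_tsum _ fun n _ => hg n) hC)
  exact ⟨summable_of_sum_range_le hf h', Real.tsum_le_of_sum_range_le hf h'⟩

/-- The generalized discrete Hardy operator is bounded on `ℓ^p` with norm at most
`1/((1 - 1/p)_ℓ)`. -/
theorem Hardy_operator_bounded (l : ℕ) (hl : 1 ≤ l) (p : ℝ) (hp : 1 < p)
    (v : ℕ → ℂ) (hv : Summable fun n => ‖v n‖ ^ p) :
    (Summable fun n => ‖Hop l v n‖ ^ p) ∧
      ∑' n : ℕ, ‖Hop l v n‖ ^ p ≤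
        (1 / poch (1 - 1 / p) l) ^ p * ∑' n : ℕ, ‖v n‖ ^ p := by
  obtain ⟨L, rfl⟩ : ∃ L, l = L + 1 := ⟨l - 1, by omega⟩
  have hp0 : 0 < p := by linarith
  have hpoch : 0 < poch (1 - 1 / p) (L + 1) :=
    poch_pos (by rw [sub_pos, div_lt_one hp0]; exact hp) _
  refine summable_and_tsum_le_mul_tsum_of_sum_range_le (fun n => by positivity)
    (fun n => by positivity) hv (by positivity) fun N => ?_
  calc ∑ n ∈ range N, ‖Hop (L + 1) v n‖ ^ p
      ≤ ∑ n ∈ range N, iteratedHardy (L + 1) (fun k => ‖v k‖) n ^ p :=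
        sum_le_sum fun n _ => rpow_le_rpow (norm_nonneg _) (norm_Hop_le L v n) hp0.le
    _ ≤ _ := iteratedHardy.sum_rpow_le hp (fun k => norm_nonneg (v k)) (L + 1) N
end

section
/- Let p > 1 and 0 ≤ α < p − 1 be real numbers, and define H(x) = (1 − ((α+1)/p)x)^{1−p} − (1+x)^α for x ∈ [0,1] and ρ_n = ((p − α − 1)/p)^{p−1} n^{α−p+1} H(1/n) for integers n ≥ 1. Then for every finitely supported sequence u : ℕ → ℂ with u_0 = 0, one has ∑_{n=1}^∞ n^α |u_n − u_{n−1}|^p ≥ ∑_{n=1}^∞ ρ_n |u_n|^p; moreover ρ_n > ((p−α−1)/p)^p n^{α−p} for every n ≥ 1, so this improves the classical Copson inequality ∑_{n=1}^∞ n^α |u_n − u_{n−1}|^p ≥ ((p−α−1)/p)^p ∑_{n=1}^∞ n^{α−p} |u_n|^p. -/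
/-- The auxiliary function `H(x) = (1 - ((α+1)/p)x)^{1-p} - (1+x)^α`. -/
noncomputable def Hfun (p α x : ℝ) : ℝ := (1 - ((α + 1) / p) * x) ^ (1 - p) - (1 + x) ^ α

/-- The improved Copson weight `ρ_n = ((p-α-1)/p)^{p-1} n^{α-p+1} H(1/n)`. -/
noncomputable def rho (p α : ℝ) (n : ℕ) : ℝ :=
  ((p - α - 1) / p) ^ (p - 1) * (n : ℝ) ^ (α - p + 1) * Hfun p α (1 / n)

/-!
Write `C = (p-α-1)/p` and `D = (α+1)/p = 1 - C`. The weight splits as `ρ_m = A_m - B_{m+1}` with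
`A_m = C^{p-1} m^α (m-D)^{1-p}` and `B_m = C^{p-1} m^α (m-1)^{1-p}`. Convexity of `t ↦ t^p`, applied
to `|u_m| ≤ |∇u_m| + |u_{m-1}|`, gives the pointwise bound
`A_m |u_m|^p - B_m |u_{m-1}|^p ≤ m^α |∇u_m|^p`, and summing over `m` the `B`-terms telescope away.
The comparison `ρ_n > C^p n^{α-p}` amounts to `H(x) > C x`, which follows from Bernoulli-type
inequalities, according to whether `α ≤ D` or `D ≤ α`.
-/

open Real Finset

lemma one_add_mul_lt_one_sub_rpow_neg {t q : ℝ} (ht0 : 0 < t) (ht1 : t < 1) (hq : 0 < q) :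
    1 + q * t < (1 - t) ^ (-q) := by
  have h1t : 0 < 1 - t := by linarith
  have hexp : 1 + q * t < exp (q * t) := by linarith [add_one_lt_exp (x := q * t) (by positivity)]
  rw [rpow_neg h1t.le, lt_inv_comm₀ (by positivity) (rpow_pos_of_pos h1t q)]
  calc (1 - t) ^ q ≤ exp (-t) ^ q :=
        rpow_le_rpow h1t.le (by linarith [add_one_le_exp (-t)]) hq.le
    _ = (exp (q * t))⁻¹ := by rw [← exp_mul, ← exp_neg]; ring_nf
    _ < (1 + q * t)⁻¹ := inv_strictAnti₀ (by positivity) hexp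

lemma mul_div_rpow_eq_rpow_one_sub_mul {p c d : ℝ} (hc : 0 < c) (hd : 0 ≤ d) :
    c * (d / c) ^ p = c ^ (1 - p) * d ^ p := by
  rw [div_rpow hd hc.le, rpow_sub hc, rpow_one]
  field_simp

lemma rpow_sub_one_mul_add_rpow_le {p l m a b : ℝ} (hp : 1 ≤ p) (hl : 0 < l) (hm : 0 < m)
    (hlm : l + m = 1) (ha : 0 ≤ a) (hb : 0 ≤ b) :
    l ^ (p - 1) * (a + b) ^ p ≤ a ^ p + (l / m) ^ (p - 1) * b ^ p := by
  have hconv := (convexOn_rpow hp).2 (Set.mem_Ici.2 (div_nonneg ha hl.le))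
    (Set.mem_Ici.2 (div_nonneg hb hm.le)) hl.le hm.le hlm
  simp only [smul_eq_mul] at hconv
  rw [mul_div_cancel₀ _ hl.ne', mul_div_cancel₀ _ hm.ne', mul_div_rpow_eq_rpow_one_sub_mul hl ha,
    mul_div_rpow_eq_rpow_one_sub_mul hm hb] at hconv
  have hll : l ^ (p - 1) * l ^ (1 - p) = 1 := by rw [← rpow_add hl]; norm_num
  have hlm' : l ^ (p - 1) * m ^ (1 - p) = (l / m) ^ (p - 1) := by
    rw [show 1 - p = -(p - 1) by ring, rpow_neg hm.le, ← div_eq_mul_inv, div_rpow hl.le hm.le]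
  calc l ^ (p - 1) * (a + b) ^ p ≤ l ^ (p - 1) * (l ^ (1 - p) * a ^ p + m ^ (1 - p) * b ^ p) :=
        mul_le_mul_of_nonneg_left hconv (rpow_nonneg hl.le _)
    _ = a ^ p + (l / m) ^ (p - 1) * b ^ p := by
        rw [mul_add, ← mul_assoc, ← mul_assoc, hll, hlm', one_mul]

noncomputable def copsonA (p α : ℝ) (m : ℕ) : ℝ :=
  ((p - α - 1) / p) ^ (p - 1) * (m : ℝ) ^ α * ((m : ℝ) - (α + 1) / p) ^ (1 - p)

-- At `m = 1` this is the junk value `0 ^ (1 - p) = 0`; it only ever multiplies `|u_0|^p = 0`.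
noncomputable def copsonB (p α : ℝ) (m : ℕ) : ℝ :=
  ((p - α - 1) / p) ^ (p - 1) * (m : ℝ) ^ α * ((m : ℝ) - 1) ^ (1 - p)

section

variable {p α : ℝ}

lemma rho_eq_copsonA_sub_copsonB (hp : 1 < p) (hα : α < p - 1) {m : ℕ} (hm : 1 ≤ m) :
    rho p α m = copsonA p α m - copsonB p α (m + 1) := by
  have hm1 : (1 : ℝ) ≤ m := by exact_mod_cast hm
  have hm0 : (0 : ℝ) < m := by linarith
  have hD : (α + 1) / p ≤ 1 := by rw [div_le_one (by linarith)]; linarith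
  have hDm : 0 ≤ 1 - (α + 1) / p * (1 / (m : ℝ)) := by
    rw [sub_nonneg, ← div_eq_mul_one_div, div_le_one hm0]; linarith
  have hA : (m : ℝ) ^ (α - p + 1) * (1 - (α + 1) / p * (1 / (m : ℝ))) ^ (1 - p)
      = (m : ℝ) ^ α * ((m : ℝ) - (α + 1) / p) ^ (1 - p) := by
    rw [show α - p + 1 = α + (1 - p) by ring, rpow_add hm0, mul_assoc, ← mul_rpow hm0.le hDm]
    congr 3
    field_simp
  have hB : (m : ℝ) ^ (α - p + 1) * (1 + 1 / (m : ℝ)) ^ α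
      = ((m : ℝ) + 1) ^ α * (m : ℝ) ^ (1 - p) := by
    rw [show α - p + 1 = α + (1 - p) by ring, rpow_add hm0, mul_comm (_ ^ α), mul_assoc,
      ← mul_rpow hm0.le (by positivity), mul_comm]
    congr 3
    field_simp
  simp only [rho, Hfun, copsonA, copsonB, Nat.cast_add, Nat.cast_one, add_sub_cancel_right]
  linear_combination ((p - α - 1) / p) ^ (p - 1) * (hA - hB)

lemma copsonA_one (hp : 1 < p) (hα : α < p - 1) : copsonA p α 1 = 1 := by
  have hC : 0 < (p - α - 1) / p := div_pos (by linarith) (by linarith)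
  rw [copsonA, Nat.cast_one, one_rpow, mul_one,
    show (1 : ℝ) - (α + 1) / p = (p - α - 1) / p by field_simp; ring, ← rpow_add hC]
  norm_num

lemma copsonA_mul_sub_copsonB_mul_le (hp : 1 < p) (hα : α < p - 1) {m : ℕ} (hm : 2 ≤ m)
    {x y z : ℝ} (hx : 0 ≤ x) (hy : 0 ≤ y) (hz : 0 ≤ z) (hxyz : x ≤ z + y) :
    copsonA p α m * x ^ p - copsonB p α m * y ^ p ≤ (m : ℝ) ^ α * z ^ p := by
  have hp0 : 0 < p := by linarith
  have hC : 0 < (p - α - 1) / p := div_pos (by linarith) hp0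
  have hm1 : 0 < (m : ℝ) - 1 := by
    have : (2 : ℝ) ≤ m := by exact_mod_cast hm
    linarith
  have hmD : 0 < (m : ℝ) - (α + 1) / p := by
    have : (α + 1) / p < 1 := by rw [div_lt_one hp0]; linarith
    linarith
  have hlm : (p - α - 1) / p / ((m : ℝ) - (α + 1) / p) + ((m : ℝ) - 1) / ((m : ℝ) - (α + 1) / p)
      = 1 := by
    rw [← add_div, div_eq_one_iff_eq hmD.ne']
    field_simp
    ring
  have hconv := rpow_sub_one_mul_add_rpow_le hp.le (div_pos hC hmD) (div_pos hm1 hmD) hlm hz hy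
  rw [div_div_div_cancel_right₀ hmD.ne'] at hconv
  have hxp := mul_le_mul_of_nonneg_left (rpow_le_rpow hx hxyz hp0.le)
    (rpow_nonneg (div_pos hC hmD).le (p - 1))
  have hA : copsonA p α m = (m : ℝ) ^ α * ((p - α - 1) / p / ((m : ℝ) - (α + 1) / p)) ^ (p - 1) := by
    rw [copsonA, div_rpow hC.le hmD.le, show (1 : ℝ) - p = -(p - 1) by ring, rpow_neg hmD.le]
    ring
  have hB : copsonB p α m = (m : ℝ) ^ α * ((p - α - 1) / p / ((m : ℝ) - 1)) ^ (p - 1) := by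
    rw [copsonB, div_rpow hC.le hm1.le, show (1 : ℝ) - p = -(p - 1) by ring, rpow_neg hm1.le]
    ring
  rw [hA, hB]
  linear_combination (m : ℝ) ^ α * hxp.trans hconv

theorem sum_rho_mul_rpow_le (hp : 1 < p) (hα : α < p - 1) {x z : ℕ → ℝ} {M : ℕ}
    (hx : ∀ n, 0 ≤ x n) (hz : ∀ n, 0 ≤ z n) (hx0 : x 0 = 0) (hxM : x M = 0)
    (hxz : ∀ n, x (n + 1) ≤ z n + x n) :
    ∑ n ∈ range M, rho p α (n + 1) * x (n + 1) ^ p ≤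
      ∑ n ∈ range M, ((n + 1 : ℕ) : ℝ) ^ α * z n ^ p := by
  have hp0 : p ≠ 0 := by positivity
  set F : ℕ → ℝ := fun n => copsonB p α (n + 1) * x n ^ p
  have htel : ∑ n ∈ range M, rho p α (n + 1) * x (n + 1) ^ p =
      ∑ n ∈ range M, (copsonA p α (n + 1) * x (n + 1) ^ p - F n) + (F 0 - F M) := by
    rw [← sum_range_sub', ← sum_add_distrib]
    refine sum_congr rfl fun n _ => ?_
    rw [rho_eq_copsonA_sub_copsonB hp hα (Nat.le_add_left 1 n)]
    ring
  rw [htel]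
  simp only [F, hx0, hxM, zero_rpow hp0, mul_zero, sub_zero, add_zero]
  refine sum_le_sum fun n _ => ?_
  rcases n with _ | n
  · have h1 : x 1 ≤ z 0 := by simpa [hx0] using hxz 0
    simp only [zero_add, hx0, zero_rpow hp0, mul_zero, sub_zero, copsonA_one hp hα,
      Nat.cast_one, one_rpow, one_mul]
    exact rpow_le_rpow (hx 1) h1 (by linarith)
  · exact copsonA_mul_sub_copsonB_mul_le hp hα (by omega) (hx _) (hx _) (hz _) (hxz _)

lemma mul_lt_Hfun (hp : 1 < p) (hα0 : 0 ≤ α) (hα : α < p - 1) {x : ℝ} (hx : 0 < x)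
    (hDx : (α + 1) / p * x < 1) : (p - α - 1) / p * x < Hfun p α x := by
  have hp0 : 0 < p := by linarith
  have hC : (p - α - 1) / p = 1 - (α + 1) / p := by field_simp; ring
  have hpD : (p - 1) * ((α + 1) / p) = α + (1 - (α + 1) / p) := by field_simp; ring
  set D := (α + 1) / p
  have hD0 : 0 < D := by positivity
  have hD1 : D < 1 := by rw [div_lt_one hp0]; linarith
  rw [Hfun, hC]
  rcases le_total α D with hαD | hDα
  · have h1 := one_add_mul_lt_one_sub_rpow_neg (by positivity) hDx (by linarith : 0 < p - 1)
    have h2 : (1 + x) ^ α ≤ 1 + α * x :=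
      rpow_one_add_le_one_add_mul_self (by linarith) hα0 (hαD.trans hD1.le)
    have e : (p - 1) * (D * x) = (α + (1 - D)) * x := by rw [← hpD]; ring
    rw [neg_sub] at h1
    linarith
  · -- `(1 + x)^D < 1 + D x ≤ (1 - D x)⁻¹`, raised to the power `p - 1`
    have hb : (1 + x) ^ D < 1 + D * x :=
      rpow_one_add_lt_one_add_mul_self (by linarith) hx.ne' hD0 hD1
    have h1x : 0 < 1 + x := by linarith
    have hinv : (1 + x) ^ D < (1 - D * x)⁻¹ := by
      refine hb.trans_le ?_
      rw [← one_div, le_div_iff₀ (by linarith)]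
      nlinarith [sq_nonneg (D * x)]
    have h1 : (1 + x) ^ ((p - 1) * D) < (1 - D * x) ^ (1 - p) := by
      have := rpow_lt_rpow (rpow_nonneg h1x.le D) hinv (by linarith : 0 < p - 1)
      rwa [← rpow_mul h1x.le, mul_comm D, inv_rpow (by linarith), ← rpow_neg (by linarith),
        neg_sub] at this
    set w := (1 + x) ^ (α - D)
    have hw : 1 ≤ w := one_le_rpow (by linarith) (by linarith)
    have e1 : (1 + x) ^ ((p - 1) * D) = w * (1 + x) := by
      rw [hpD, show α + (1 - D) = α - D + 1 by ring, rpow_add_one h1x.ne']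
    have e2 : (1 + x) ^ α = w * (1 + x) ^ D := by
      rw [← rpow_add h1x, sub_add_cancel]
    have hCx : 0 ≤ (1 - D) * x := by nlinarith
    rw [e1] at h1
    rw [e2]
    nlinarith [mul_le_mul_of_nonneg_left hb.le (zero_le_one.trans hw),
      mul_le_mul_of_nonneg_right hw hCx]

lemma rpow_mul_rpow_lt_rho (hp : 1 < p) (hα0 : 0 ≤ α) (hα : α < p - 1) {n : ℕ} (hn : 1 ≤ n) :
    ((p - α - 1) / p) ^ p * (n : ℝ) ^ (α - p) < rho p α n := by
  have hp0 : 0 < p := by linarith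
  have hC : 0 < (p - α - 1) / p := div_pos (by linarith) hp0
  have hn0 : (0 : ℝ) < n := by exact_mod_cast hn
  have hx : (α + 1) / p * (1 / (n : ℝ)) < 1 := by
    have hD : (α + 1) / p < 1 := by rw [div_lt_one hp0]; linarith
    exact mul_lt_one_of_nonneg_of_lt_one_left (by positivity) hD
      (by rw [div_le_one hn0]; exact_mod_cast hn)
  have hH := mul_lt_Hfun hp hα0 hα (by positivity) hx
  have eC : ((p - α - 1) / p) ^ p = ((p - α - 1) / p) ^ (p - 1) * ((p - α - 1) / p) := by
    rw [← rpow_add_one hC.ne', sub_add_cancel]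
  have en : (n : ℝ) ^ (α - p + 1) = (n : ℝ) ^ (α - p) * n := rpow_add_one hn0.ne' _
  calc ((p - α - 1) / p) ^ p * (n : ℝ) ^ (α - p)
      = ((p - α - 1) / p) ^ (p - 1) * (n : ℝ) ^ (α - p + 1) * ((p - α - 1) / p * (1 / n)) := by
        rw [eC, en]
        field_simp
    _ < rho p α n := mul_lt_mul_of_pos_left hH (by positivity)

end

/-- Improved Copson inequality: the weight `ρ_n` works in the Copson inequality and is
pointwise strictly bigger than the classical Copson weight `((p-α-1)/p)^p n^{α-p}`. -/
theorem improved_Copson (p α : ℝ) (hp : 1 < p) (hα0 : 0 ≤ α) (hα : α < p - 1)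
    (u : ℕ → ℂ) (hfin : (Function.support u).Finite) (h0 : u 0 = 0) :
    (∑' n : ℕ, ((n + 1 : ℕ) : ℝ) ^ α * ‖u (n + 1) - u n‖ ^ p ≥
        ∑' n : ℕ, rho p α (n + 1) * ‖u (n + 1)‖ ^ p) ∧
      (∀ n : ℕ, 1 ≤ n → rho p α n > ((p - α - 1) / p) ^ p * (n : ℝ) ^ (α - p)) := by
  refine ⟨?_, fun n hn => rpow_mul_rpow_lt_rho hp hα0 hα hn⟩
  have hp0 : p ≠ 0 := by positivity
  obtain ⟨N, hN⟩ := hfin.bddAbove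
  have hu : ∀ n, N < n → u n = 0 := fun n hn =>
    Function.notMem_support.1 fun h => (hN h).not_gt hn
  rw [ge_iff_le, tsum_eq_sum (s := range (N + 1)), tsum_eq_sum (s := range (N + 1))]
  · exact sum_rho_mul_rpow_le hp hα (fun n => norm_nonneg (u n)) (fun n => norm_nonneg _)
      (by simp [h0]) (by simp [hu (N + 1) (by omega)]) fun n => norm_le_norm_sub_add _ _
  all_goals
    intro n hn
    rw [mem_range, not_lt] at hn
    simp [hu n (by omega), hu (n + 1) (by omega), zero_rpow hp0]
end

section
/- Let p > 1 and α < 0 be real numbers, and define H(x) = (1 − x)^α / (1 − ((α+1)/p)x)^{p−1} − 1 for x ∈ [0,1). Then H(x) > ((p − α − 1)/p) · x for every x ∈ (0,1). -/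
/-!
With `a = 1 + ((p-α-1)/p) x` and `b = 1 - ((α+1)/p) x`, the weighted mean `(a + (p-1) b) / p`
equals `1 - (α/p) x`. Weighted AM-GM gives `a b^{p-1} ≤ (1 - (α/p) x)^p`, and Bernoulli's
inequality for the negative exponent `α/p` gives `1 - (α/p) x < (1-x)^{α/p}`; raising to the
power `p` yields `a b^{p-1} < (1-x)^α`, which is the claim after dividing by `b^{p-1}`.
-/

open Real

theorem one_add_mul_self_lt_rpow_one_add_of_neg {s q : ℝ} (hs : -1 < s) (hs' : s ≠ 0)
    (hq : q < 0) : 1 + q * s < (1 + s) ^ q := by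
  have hs1 : 0 < 1 + s := by linarith
  have hlog : log (1 + s) < s := by
    linarith [log_lt_sub_one_of_pos hs1 (by simpa using hs')]
  calc 1 + q * s < 1 + log (1 + s) * q := by nlinarith
    _ ≤ exp (log (1 + s) * q) := add_one_le_exp _ |>.trans_eq' (add_comm _ _)
    _ = (1 + s) ^ q := (rpow_def_of_pos hs1 q).symm

theorem mul_rpow_sub_one_le_weighted_mean_rpow {a b p : ℝ} (ha : 0 ≤ a) (hb : 0 ≤ b)
    (hp : 1 ≤ p) : a * b ^ (p - 1) ≤ ((a + (p - 1) * b) / p) ^ p := by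
  have hp0 : 0 < p := by linarith
  have hgm := geom_mean_le_arith_mean2_weighted (w₁ := 1 / p) (w₂ := (p - 1) / p)
    (by positivity) (div_nonneg (by linarith) hp0.le) ha hb (by field_simp; ring)
  have hmean : 1 / p * a + (p - 1) / p * b = (a + (p - 1) * b) / p := by ring
  rw [hmean] at hgm
  have hpow := rpow_le_rpow (by positivity) hgm hp0.le
  rwa [mul_rpow (by positivity) (by positivity), ← rpow_mul ha, ← rpow_mul hb,
    one_div_mul_cancel hp0.ne', rpow_one, div_mul_cancel₀ _ hp0.ne'] at hpow

/-- The auxiliary function `H(x) = (1-x)^α / (1 - ((α+1)/p)x)^{p-1} - 1` satisfies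
`H(x) > ((p-α-1)/p) x` on `(0,1)`. -/
theorem aux_H_ineq_neg (p α : ℝ) (hp : 1 < p) (hα : α < 0)
    (x : ℝ) (hx : x ∈ Set.Ioo (0 : ℝ) 1) :
    (1 - x) ^ α / (1 - ((α + 1) / p) * x) ^ (p - 1) - 1 > ((p - α - 1) / p) * x := by
  obtain ⟨hx0, hx1⟩ := hx
  have hp0 : 0 < p := by linarith
  have hq : α / p < 0 := div_neg_of_neg_of_pos hα hp0
  set a := 1 + ((p - α - 1) / p) * x
  set b := 1 - ((α + 1) / p) * x
  have hb : 0 < b := by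
    have : (α + 1) / p < 1 := (div_lt_one hp0).mpr (by linarith)
    nlinarith
  have ha : 0 < a := by
    have : 0 < (p - α - 1) / p := div_pos (by linarith) hp0
    positivity
  have hmean : (a + (p - 1) * b) / p = 1 + α / p * -x := by simp only [a, b]; field_simp; ring
  have hbern : 1 + α / p * -x < (1 + -x) ^ (α / p) :=
    one_add_mul_self_lt_rpow_one_add_of_neg (by linarith) (by linarith) hq
  have key : a * b ^ (p - 1) < (1 - x) ^ α :=
    calc a * b ^ (p - 1) ≤ (1 + α / p * -x) ^ p :=
          hmean ▸ mul_rpow_sub_one_le_weighted_mean_rpow ha.le hb.le hp.le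
      _ < ((1 + -x) ^ (α / p)) ^ p := rpow_lt_rpow (by nlinarith) hbern hp0
      _ = (1 - x) ^ α := by
          rw [← rpow_mul (by linarith), div_mul_cancel₀ _ hp0.ne', ← sub_eq_add_neg]
  rw [gt_iff_lt, lt_sub_iff_add_lt', lt_div_iff₀ (rpow_pos_of_pos hb _)]
  exact key
end

section
/- Let p > 1 and 0 ≤ α < p − 1 be real numbers, and define H(x) = (1 − ((α+1)/p)x)^{1−p} − (1+x)^α for x ∈ [0,1]. Then H(x) > ((p − α − 1)/p) · x for every x ∈ (0,1). -/
/-!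
With `c = (α+1)/p`, so that `(p-1)c = α + 1 - c` and `(p-α-1)/p = 1 - c`, the inequality follows
from three exponential bounds: `(1 - cx)^{1-p} ≥ e^{(p-1)cx}` and `(1+x)^α ≤ e^{αx}`, both from
`1 + t ≤ e^t`, and the strict `e^{αx} + (1-c)x < e^{αx} e^{(1-c)x}`.
-/

open Real

lemma Real.one_add_rpow_le_exp_mul {x a : ℝ} (hx : -1 ≤ x) (ha : 0 ≤ a) :
    (1 + x) ^ a ≤ exp (a * x) := by
  calc (1 + x) ^ a ≤ exp x ^ a := by
        gcongr
        · linarith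
        · linarith [add_one_le_exp x]
    _ = exp (a * x) := by rw [← exp_mul, mul_comm]

lemma Real.exp_neg_mul_le_one_sub_rpow {u s : ℝ} (hu : u < 1) (hs : s ≤ 0) :
    exp (-(s * u)) ≤ (1 - u) ^ s := by
  calc exp (-(s * u)) = exp (-u) ^ s := by rw [← exp_mul]; ring_nf
    _ ≤ (1 - u) ^ s :=
        rpow_le_rpow_of_nonpos (sub_pos.2 hu) (one_sub_le_exp_neg u) hs

lemma Real.add_lt_mul_exp {a t : ℝ} (ha : 1 ≤ a) (ht : 0 < t) : a + t < a * exp t := by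
  have hexp : t + 1 < exp t := add_one_lt_exp ht.ne'
  nlinarith

/-- The auxiliary function `H(x) = (1 - ((α+1)/p)x)^{1-p} - (1+x)^α` satisfies
`H(x) > ((p-α-1)/p) x` on `(0,1)`. -/
theorem aux_H_ineq_nonneg (p α : ℝ) (hp : 1 < p) (hα0 : 0 ≤ α) (hα : α < p - 1)
    (x : ℝ) (hx : x ∈ Set.Ioo (0 : ℝ) 1) :
    (1 - ((α + 1) / p) * x) ^ (1 - p) - (1 + x) ^ α > ((p - α - 1) / p) * x := by
  obtain ⟨hx0, hx1⟩ := hx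
  have hp0 : 0 < p := by linarith
  set c := (α + 1) / p with hc
  have hcp : c * p = α + 1 := div_mul_cancel₀ _ hp0.ne'
  have hc1 : c < 1 := (div_lt_one hp0).2 (by linarith)
  have hcx : c * x < 1 := by nlinarith [div_pos (by linarith : 0 < α + 1) hp0]
  have hgap : (p - α - 1) / p = 1 - c := by rw [hc]; field_simp; ring
  rw [hgap, gt_iff_lt, lt_sub_iff_add_lt']
  calc (1 + x) ^ α + (1 - c) * x ≤ exp (α * x) + (1 - c) * x := by
        gcongr; exact one_add_rpow_le_exp_mul (by linarith) hα0
    _ < exp (α * x) * exp ((1 - c) * x) :=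
        add_lt_mul_exp (one_le_exp (by positivity)) (mul_pos (sub_pos.2 hc1) hx0)
    _ = exp (-((1 - p) * (c * x))) := by
        rw [← exp_add]; congr 1; linear_combination -x * hcp
    _ ≤ (1 - c * x) ^ (1 - p) := exp_neg_mul_le_one_sub_rpow hcx (by linarith)
end

section
/- Let ℓ ≥ 1 be an integer and p > 1 a real number. Then for every smooth function φ : (0,∞) → ℝ with compact support contained in (0,∞), one has ∫_0^∞ |φ^{(ℓ)}(x)|^p dx ≥ ((p-1)/p)_ℓ^p · ∫_0^∞ |φ(x)|^p / x^{ℓp} dx, where φ^{(ℓ)} denotes the ℓ-th derivative of φ. -/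
open MeasureTheory Set Filter
open scoped ENNReal NNReal

namespace PBirmanAux

/-- Gluing continuity: continuous on `Ioi 0`, zero off a closed `K ⊆ Ioi 0`. -/
lemma cont_glue {u : ℝ → ℝ} {K : Set ℝ} (hK : IsClosed K) (hKs : K ⊆ Set.Ioi 0)
    (hu : ContinuousOn u (Set.Ioi 0)) (hz : ∀ x ∉ K, u x = 0) : Continuous u := by
  rw [continuous_iff_continuousAt]
  intro x
  by_cases hx : x ∈ Set.Ioi (0 : ℝ)
  · exact hu.continuousAt (isOpen_Ioi.mem_nhds hx)
  · have hxK : x ∈ Kᶜ := fun h => hx (hKs h)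
    have h0 : u =ᶠ[nhds x] (fun _ => (0 : ℝ)) := by
      filter_upwards [hK.isOpen_compl.mem_nhds hxK] with y hy using hz y hy
    exact h0.continuousAt

lemma memLp_aux {u : ℝ → ℝ} {K : Set ℝ} (hKc : IsCompact K) (hKs : K ⊆ Set.Ioi 0)
    (hu : ContinuousOn u (Set.Ioi 0)) (hz : ∀ x ∉ K, u x = 0) (r : ℝ≥0∞) :
    MemLp u r (volume.restrict (Set.Ioi 0)) :=
  ((cont_glue hKc.isClosed hKs hu hz).memLp_of_hasCompactSupport
    (HasCompactSupport.intro hKc hz)).restrict _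

lemma integral_Ioi_eq_interval {u : ℝ → ℝ} {c d : ℝ} (hc : 0 < c) (hcd : c ≤ d)
    (hz : ∀ x ∉ Set.Ioc c d, u x = 0) :
    ∫ x in Set.Ioi (0 : ℝ), u x = ∫ x in c..d, u x := by
  rw [intervalIntegral.integral_of_le hcd,
    setIntegral_eq_integral_of_forall_compl_eq_zero (s := Set.Ioc c d) (fun x hx => hz x hx),
    setIntegral_eq_integral_of_forall_compl_eq_zero]
  intro x hx
  apply hz
  intro hmem
  exact hx (lt_trans hc hmem.1)

lemma abs_rpow_mul_abs {t : ℝ} {p : ℝ} (hp : 1 < p) :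
    |t| ^ (p - 2) * |t| = |t| ^ (p - 1) := by
  rcases eq_or_ne t 0 with h | h
  · simp [h, Real.zero_rpow (by linarith : p - 1 ≠ 0)]
  · nth_rewrite 2 [← Real.rpow_one |t|]
    rw [← Real.rpow_add (abs_pos.mpr h)]
    congr 1
    ring

/-- Weighted Hardy inequality step. -/
lemma hardy_step {p s : ℝ} (hp : 1 < p) (hs1 : 1 < s) (f : ℝ → ℝ)
    (hf : ContDiff ℝ (⊤ : ℕ∞) f) (hcpt : HasCompactSupport f) (hsupp : tsupport f ⊆ Set.Ioi 0) :
    ∫ x in Set.Ioi (0 : ℝ), |f x| ^ p * x ^ (-s) ≤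
      (p / (s - 1)) ^ p * ∫ x in Set.Ioi (0 : ℝ), |deriv f x| ^ p * x ^ (p - s) := by
  have h0p : (0 : ℝ) < p := lt_trans one_pos hp
  have hs0 : (0 : ℝ) < s - 1 := by linarith
  have hC : (0 : ℝ) < p / (s - 1) := div_pos h0p hs0
  have hRnn : 0 ≤ ∫ x in Set.Ioi (0 : ℝ), |deriv f x| ^ p * x ^ (p - s) := by
    apply setIntegral_nonneg measurableSet_Ioi
    intro x hx
    exact mul_nonneg (Real.rpow_nonneg (abs_nonneg _) _) (Real.rpow_nonneg (le_of_lt hx) _)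
  -- trivial case: empty support
  by_cases hK0 : tsupport f = ∅
  · have hf0 : ∀ x, f x = 0 := fun x =>
      image_eq_zero_of_notMem_tsupport (by simp [hK0])
    have : ∫ x in Set.Ioi (0 : ℝ), |f x| ^ p * x ^ (-s) = 0 := by
      apply integral_eq_zero_of_ae
      filter_upwards with x
      simp [hf0 x, Real.zero_rpow (ne_of_gt h0p)]
    rw [this]
    positivity
  -- nontrivial case
  set K := tsupport f with hKdef
  have hKne : K.Nonempty := Set.nonempty_iff_ne_empty.mpr hK0
  have hKcpt : IsCompact K := hcpt
  set a := sInf K with ha_def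
  set b := sSup K with hb_def
  have haK : a ∈ K := hKcpt.sInf_mem hKne
  have ha0 : 0 < a := hsupp haK
  have hKab : K ⊆ Set.Icc a b := fun x hx =>
    ⟨csInf_le hKcpt.bddBelow hx, le_csSup hKcpt.bddAbove hx⟩
  have hab : a ≤ b := (hKab haK).2
  set c := a / 2 with hc_def
  set d := b + 1 with hd_def
  have hc0 : 0 < c := by positivity
  have hcd : c ≤ d := by
    have : c < a := by linarith
    linarith
  have hKcd : K ⊆ Set.Ioo c d := by
    intro x hx
    rcases hKab hx with ⟨h1, h2⟩
    constructor <;> [linarith; linarith]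
  -- derivative of |f|^p
  have hfd : Differentiable ℝ f := hf.differentiable (by simp)
  set U : ℝ → ℝ := fun y => |f y| ^ p with hU_def
  set u' : ℝ → ℝ := fun x => p * |f x| ^ (p - 2) * f x * deriv f x with hu'_def
  have hu : ∀ x, HasDerivAt U (u' x) x := by
    intro x
    have h1 := (hasDerivAt_abs_rpow (f x) hp).comp x (hfd x).hasDerivAt
    simpa [hu'_def, Function.comp_def, mul_assoc] using h1
  have hUc1 : ContDiff ℝ 1 U := by
    have := (hf.of_le (by simp) : ContDiff ℝ 1 f).norm_rpow hp
    simpa [hU_def, Real.norm_eq_abs] using this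
  have hu'cont : Continuous u' := by
    have h1 : Continuous (deriv U) := hUc1.continuous_deriv le_rfl
    have h2 : deriv U = u' := funext fun x => (hu x).deriv
    rwa [h2] at h1
  have hUcont : Continuous U := hUc1.continuous
  -- off-support vanishing
  have hfz : ∀ x ∉ K, f x = 0 := fun x hx => image_eq_zero_of_notMem_tsupport hx
  have hdfz : ∀ x ∉ K, deriv f x = 0 := by
    intro x hx
    by_contra h
    exact hx (support_deriv_subset (by simpa using h))
  -- integration by parts on [c, d]
  set v : ℝ → ℝ := fun y => y ^ (1 - s) with hv_def
  set v' : ℝ → ℝ := fun y => (1 - s) * y ^ (-s) with hv'_def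
  have hIcc_pos : ∀ x ∈ Set.uIcc c d, (0 : ℝ) < x := by
    intro x hx
    rw [Set.uIcc_of_le hcd] at hx
    exact lt_of_lt_of_le hc0 hx.1
  have hvcont : ContinuousOn v (Set.uIcc c d) := by
    apply ContinuousOn.rpow_const continuousOn_id
    intro x hx
    exact Or.inl (ne_of_gt (hIcc_pos x hx))
  have hv'cont : ContinuousOn v' (Set.uIcc c d) := by
    apply ContinuousOn.mul continuousOn_const
    apply ContinuousOn.rpow_const continuousOn_id
    intro x hx
    exact Or.inl (ne_of_gt (hIcc_pos x hx))
  have hvd : ∀ x ∈ Set.Ioo (min c d) (max c d), HasDerivAt v (v' x) x := by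
    intro x hx
    rw [min_eq_left hcd, max_eq_right hcd] at hx
    have hx0 : x ≠ 0 := ne_of_gt (lt_trans hc0 hx.1)
    have := Real.hasDerivAt_rpow_const (x := x) (p := 1 - s) (Or.inl hx0)
    convert this using 1
    rw [hv'_def]
    norm_num
  have ibp := intervalIntegral.integral_deriv_mul_eq_sub_of_hasDerivAt
    (u := U) (v := v) (u' := u') (v' := v')
    hUcont.continuousOn hvcont
    (fun x _ => hu x) hvd
    (hu'cont.intervalIntegrable c d)
    (hv'cont.intervalIntegrable)
  have hUd : U d = 0 := by
    have : d ∉ K := fun h => by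
      have := (hKcd h).2
      simp at this
    simp [hU_def, hfz d this, Real.zero_rpow (ne_of_gt h0p)]
  have hUc : U c = 0 := by
    have : c ∉ K := fun h => by
      have := (hKcd h).1
      simp at this
    simp [hU_def, hfz c this, Real.zero_rpow (ne_of_gt h0p)]
  rw [hUd, hUc, zero_mul, zero_mul, sub_zero] at ibp
  -- split the integral
  have hi1 : IntervalIntegrable (fun x => u' x * v x) volume c d :=
    ((hu'cont.continuousOn).mul hvcont).intervalIntegrable
  have hi2 : IntervalIntegrable (fun x => U x * v' x) volume c d :=
    ((hUcont.continuousOn).mul hv'cont).intervalIntegrable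
  rw [intervalIntegral.integral_add hi1 hi2] at ibp
  -- identify ∫ U v' with (1-s) * L'
  have hUv' : ∫ x in c..d, U x * v' x = (1 - s) * ∫ x in c..d, |f x| ^ p * x ^ (-s) := by
    rw [← intervalIntegral.integral_const_mul]
    apply intervalIntegral.integral_congr
    intro x _
    simp only [hU_def, hv'_def]
    ring
  set L := ∫ x in Set.Ioi (0 : ℝ), |f x| ^ p * x ^ (-s) with hL_def
  set R := ∫ x in Set.Ioi (0 : ℝ), |deriv f x| ^ p * x ^ (p - s) with hR_def
  have hLnn : 0 ≤ L := by
    apply setIntegral_nonneg measurableSet_Ioi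
    intro x hx
    exact mul_nonneg (Real.rpow_nonneg (abs_nonneg _) _) (Real.rpow_nonneg (le_of_lt hx) _)
  have hLcd : L = ∫ x in c..d, |f x| ^ p * x ^ (-s) := by
    apply integral_Ioi_eq_interval hc0 hcd
    intro x hx
    have hxK : x ∉ K := fun h => hx (Set.Ioo_subset_Ioc_self (hKcd h))
    simp [hfz x hxK, Real.zero_rpow (ne_of_gt h0p)]
  have hIeq : ∫ x in Set.Ioi (0 : ℝ), u' x * v x = ∫ x in c..d, u' x * v x := by
    apply integral_Ioi_eq_interval hc0 hcd
    intro x hx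
    have hxK : x ∉ K := fun h => hx (Set.Ioo_subset_Ioc_self (hKcd h))
    simp [hu'_def, hfz x hxK]
  -- L = (s-1)⁻¹ * ∫ u' v
  have hLeq : L = (s - 1)⁻¹ * ∫ x in Set.Ioi (0 : ℝ), u' x * v x := by
    rw [hIeq, hLcd]
    rw [hUv'] at ibp
    have h1 : ∫ x in c..d, u' x * v x = (s - 1) * ∫ x in c..d, |f x| ^ p * x ^ (-s) := by
      linarith [ibp]
    rw [h1]
    field_simp
  -- Hölder setup
  set q : ℝ := p / (p - 1) with hq_def
  have hpq : q.HolderConjugate p := (Real.HolderConjugate.conjExponent hp).symm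
  set e₂ : ℝ := (p - s) / p with he2_def
  set e₁ : ℝ := (1 - s) - e₂ with he1_def
  set F₁ : ℝ → ℝ := fun x => |f x| ^ (p - 1) * x ^ e₁ with hF1_def
  set F₂ : ℝ → ℝ := fun x => |deriv f x| * x ^ e₂ with hF2_def
  have hp1ne : p - 1 ≠ 0 := by linarith
  have hpne : p ≠ 0 := ne_of_gt h0p
  -- pointwise equality |u' x * v x| = p * (F₁ x * F₂ x) on Ioi 0
  have hptwise : ∀ x ∈ Set.Ioi (0 : ℝ), |u' x * v x| = p * (F₁ x * F₂ x) := by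
    intro x hx
    have hx0 : (0 : ℝ) < x := hx
    have hsplit : x ^ (1 - s) = x ^ e₁ * x ^ e₂ := by
      rw [← Real.rpow_add hx0]
      congr 1
      rw [he1_def]
      ring
    have hvnn : 0 ≤ x ^ (1 - s) := Real.rpow_nonneg hx0.le _
    rw [hu'_def, hv_def, hF1_def, hF2_def]
    simp only
    rw [abs_mul, abs_mul, abs_mul, abs_mul, abs_of_nonneg hvnn,
      abs_of_nonneg h0p.le, abs_of_nonneg (Real.rpow_nonneg (abs_nonneg (f x)) _), hsplit]
    have habs := abs_rpow_mul_abs (t := f x) hp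
    linear_combination (p * |deriv f x| * (x ^ e₁ * x ^ e₂)) * habs
  -- Memℒp facts
  have hF1mem : MemLp F₁ (ENNReal.ofReal q) (volume.restrict (Set.Ioi 0)) := by
    apply memLp_aux hKcpt hsupp
    · apply ContinuousOn.mul
      · exact ((hf.continuous.abs).rpow_const fun x => Or.inr (by linarith)).continuousOn
      · exact ContinuousOn.rpow_const continuousOn_id fun x hx => Or.inl (ne_of_gt hx)
    · intro x hx
      simp [hF1_def, hfz x hx, Real.zero_rpow hp1ne]
  have hF2mem : MemLp F₂ (ENNReal.ofReal p) (volume.restrict (Set.Ioi 0)) := by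
    apply memLp_aux hKcpt hsupp
    · apply ContinuousOn.mul
      · exact (hf.continuous_deriv (by simp)).abs.continuousOn
      · exact ContinuousOn.rpow_const continuousOn_id fun x hx => Or.inl (ne_of_gt hx)
    · intro x hx
      simp [hF2_def, hdfz x hx]
  have hF1nn : 0 ≤ᵐ[volume.restrict (Set.Ioi (0 : ℝ))] F₁ := by
    filter_upwards [ae_restrict_mem measurableSet_Ioi] with x hx
    exact mul_nonneg (Real.rpow_nonneg (abs_nonneg _) _) (Real.rpow_nonneg (le_of_lt hx) _)
  have hF2nn : 0 ≤ᵐ[volume.restrict (Set.Ioi (0 : ℝ))] F₂ := by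
    filter_upwards [ae_restrict_mem measurableSet_Ioi] with x hx
    exact mul_nonneg (abs_nonneg _) (Real.rpow_nonneg (le_of_lt hx) _)
  have holder := integral_mul_le_Lp_mul_Lq_of_nonneg hpq hF1nn hF2nn hF1mem hF2mem
  -- identify ∫ F₁ ^ q with L
  have hF1q : ∫ x in Set.Ioi (0 : ℝ), F₁ x ^ q = L := by
    rw [hL_def]
    apply setIntegral_congr_fun measurableSet_Ioi
    intro x hx
    have hx0 : (0 : ℝ) < x := hx
    have hq1 : (p - 1) * q = p := by
      rw [hq_def]
      field_simp
    have he1q : e₁ * q = -s := by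
      rw [he1_def, he2_def, hq_def]
      field_simp
      ring
    simp only [hF1_def]
    rw [Real.mul_rpow (Real.rpow_nonneg (abs_nonneg _) _) (Real.rpow_nonneg hx0.le _),
      ← Real.rpow_mul (abs_nonneg _), ← Real.rpow_mul hx0.le, hq1, he1q]
  have hF2p : ∫ x in Set.Ioi (0 : ℝ), F₂ x ^ p = R := by
    rw [hR_def]
    apply setIntegral_congr_fun measurableSet_Ioi
    intro x hx
    have hx0 : (0 : ℝ) < x := hx
    have he2p : e₂ * p = p - s := by
      rw [he2_def]
      field_simp
    simp only [hF2_def]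
    rw [Real.mul_rpow (abs_nonneg _) (Real.rpow_nonneg hx0.le _),
      ← Real.rpow_mul hx0.le, he2p]
  -- assemble
  have habs_int : ∫ x in Set.Ioi (0 : ℝ), u' x * v x ≤
      p * ∫ x in Set.Ioi (0 : ℝ), F₁ x * F₂ x := by
    calc ∫ x in Set.Ioi (0 : ℝ), u' x * v x
        ≤ ‖∫ x in Set.Ioi (0 : ℝ), u' x * v x‖ := le_abs_self _
      _ ≤ ∫ x in Set.Ioi (0 : ℝ), ‖u' x * v x‖ := norm_integral_le_integral_norm _
      _ = ∫ x in Set.Ioi (0 : ℝ), p * (F₁ x * F₂ x) := by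
          apply setIntegral_congr_fun measurableSet_Ioi
          intro x hx
          simp only [Real.norm_eq_abs]
          exact hptwise x hx
      _ = p * ∫ x in Set.Ioi (0 : ℝ), F₁ x * F₂ x := integral_const_mul _ _
  have hmain : L ≤ (p / (s - 1)) * (L ^ (1 / q) * R ^ (1 / p)) := by
    have h2 : ∫ x in Set.Ioi (0 : ℝ), F₁ x * F₂ x ≤ L ^ (1 / q) * R ^ (1 / p) := by
      rw [← hF1q, ← hF2p]
      exact holder
    have h3 : ∫ x in Set.Ioi (0 : ℝ), u' x * v x ≤ p * (L ^ (1 / q) * R ^ (1 / p)) :=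
      le_trans habs_int (mul_le_mul_of_nonneg_left h2 h0p.le)
    calc L = (s - 1)⁻¹ * ∫ x in Set.Ioi (0 : ℝ), u' x * v x := hLeq
      _ ≤ (s - 1)⁻¹ * (p * (L ^ (1 / q) * R ^ (1 / p))) :=
          mul_le_mul_of_nonneg_left h3 (by positivity)
      _ = (p / (s - 1)) * (L ^ (1 / q) * R ^ (1 / p)) := by ring
  -- final algebra
  rcases eq_or_lt_of_le hLnn with hL0 | hL0
  · rw [← hL0]
    exact mul_nonneg (Real.rpow_nonneg hC.le _) hRnn
  · have h1q : 1 / q + 1 / p = 1 := by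
      rw [hq_def]
      field_simp
      ring
    have hLsplit : L = L ^ (1 / q) * L ^ (1 / p) := by
      rw [← Real.rpow_add hL0, h1q, Real.rpow_one]
    have hq0 : 0 < L ^ (1 / q) := Real.rpow_pos_of_pos hL0 _
    have h2 : L ^ (1 / p) ≤ (p / (s - 1)) * R ^ (1 / p) := by
      have h3 : L ^ (1 / q) * L ^ (1 / p) ≤
          L ^ (1 / q) * ((p / (s - 1)) * R ^ (1 / p)) := by
        rw [← hLsplit]
        calc L ≤ (p / (s - 1)) * (L ^ (1 / q) * R ^ (1 / p)) := hmain
          _ = L ^ (1 / q) * ((p / (s - 1)) * R ^ (1 / p)) := by ring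
      exact le_of_mul_le_mul_left h3 hq0
    have h4 : (L ^ (1 / p)) ^ p ≤ ((p / (s - 1)) * R ^ (1 / p)) ^ p :=
      Real.rpow_le_rpow (Real.rpow_nonneg hL0.le _) h2 h0p.le
    have h5 : (L ^ (1 / p)) ^ p = L := by
      rw [← Real.rpow_mul hL0.le, one_div, inv_mul_cancel₀ hpne, Real.rpow_one]
    have h6 : ((p / (s - 1)) * R ^ (1 / p)) ^ p = (p / (s - 1)) ^ p * R := by
      rw [Real.mul_rpow hC.le (Real.rpow_nonneg hRnn _), ← Real.rpow_mul hRnn,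
        one_div, inv_mul_cancel₀ hpne, Real.rpow_one]
    rw [h5, h6] at h4
    exact h4

end PBirmanAux

/-- Continuous p-Birman inequality. -/
theorem continuous_p_Birman (l : ℕ) (hl : 1 ≤ l) (p : ℝ) (hp : 1 < p)
    (φ : ℝ → ℝ) (hφ : ContDiff ℝ (⊤ : ℕ∞) φ) (hc : HasCompactSupport φ)
    (hs : tsupport φ ⊆ Set.Ioi 0) :
    ∫ x in Set.Ioi (0 : ℝ), |iteratedDeriv l φ x| ^ p ≥
      poch ((p - 1) / p) l ^ p * ∫ x in Set.Ioi (0 : ℝ), |φ x| ^ p / x ^ ((l : ℝ) * p) := by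
  have h0p : (0 : ℝ) < p := lt_trans one_pos hp
  have ha0 : (0 : ℝ) < (p - 1) / p := div_pos (by linarith) h0p
  have hpos : ∀ m : ℕ, 0 < poch ((p - 1) / p) m := by
    intro m
    unfold poch
    apply Finset.prod_pos
    intro i _
    positivity
  have hder : ∀ m : ℕ, ContDiff ℝ (⊤ : ℕ∞) (iteratedDeriv m φ) ∧
      HasCompactSupport (iteratedDeriv m φ) ∧ tsupport (iteratedDeriv m φ) ⊆ Set.Ioi 0 := by
    intro m
    induction m with
    | zero => simpa [iteratedDeriv_zero] using ⟨hφ, hc, hs⟩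
    | succ n ih =>
      rw [iteratedDeriv_succ]
      have h1 : ContDiff ℝ (((⊤ : ℕ∞) : WithTop ℕ∞) + 1) (iteratedDeriv n φ) := by
        rw [show (((⊤ : ℕ∞) : WithTop ℕ∞) + 1) = ((⊤ : ℕ∞) : WithTop ℕ∞) from by
          rw [← WithTop.coe_one, ← WithTop.coe_add, top_add]]
        exact ih.1
      exact ⟨(contDiff_succ_iff_deriv.mp h1).2.2, ih.2.1.deriv,
        subset_trans (closure_minimal support_deriv_subset (isClosed_tsupport _)) ih.2.2⟩
  have key : ∀ k, k ≤ l →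
      poch ((p - 1) / p) k ^ p *
        ∫ x in Set.Ioi (0 : ℝ), |iteratedDeriv (l - k) φ x| ^ p * x ^ (-((k : ℝ) * p)) ≤
      ∫ x in Set.Ioi (0 : ℝ), |iteratedDeriv l φ x| ^ p := by
    intro k
    induction k with
    | zero =>
      intro _
      simp [poch, Real.one_rpow, Real.rpow_zero]
    | succ n ih =>
      intro hkl
      have hnl : n ≤ l := Nat.le_of_succ_le hkl
      set s : ℝ := ((n : ℝ) + 1) * p with hs_def
      have hs1 : 1 < s := by
        have h1 : (0 : ℝ) ≤ (n : ℝ) := Nat.cast_nonneg n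
        nlinarith
      have hh := PBirmanAux.hardy_step hp hs1 (iteratedDeriv (l - (n + 1)) φ)
        (hder _).1 (hder _).2.1 (hder _).2.2
      have hidx : deriv (iteratedDeriv (l - (n + 1)) φ) = iteratedDeriv (l - n) φ := by
        rw [← iteratedDeriv_succ, show l - (n + 1) + 1 = l - n from by omega]
      rw [hidx] at hh
      have hexp1 : ∀ x : ℝ, x ^ (-(((n + 1 : ℕ) : ℝ) * p)) = x ^ (-s) := by
        intro x
        congr 1
        push_cast
        ring
      have hexp2 : ∀ x : ℝ, x ^ (p - s) = x ^ (-((n : ℝ) * p)) := by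
        intro x
        congr 1
        rw [hs_def]
        ring
      simp only [hexp1]
      simp only [hexp1, hexp2] at hh
      have hcnn : (0 : ℝ) ≤ poch ((p - 1) / p) (n + 1) ^ p :=
        Real.rpow_nonneg (hpos _).le _
      calc poch ((p - 1) / p) (n + 1) ^ p *
            ∫ x in Set.Ioi (0 : ℝ), |iteratedDeriv (l - (n + 1)) φ x| ^ p * x ^ (-s)
          ≤ poch ((p - 1) / p) (n + 1) ^ p * ((p / (s - 1)) ^ p *
            ∫ x in Set.Ioi (0 : ℝ), |iteratedDeriv (l - n) φ x| ^ p * x ^ (-((n : ℝ) * p))) :=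
          mul_le_mul_of_nonneg_left hh hcnn
        _ = poch ((p - 1) / p) n ^ p *
            ∫ x in Set.Ioi (0 : ℝ), |iteratedDeriv (l - n) φ x| ^ p * x ^ (-((n : ℝ) * p)) := by
          have hdivnn : (0 : ℝ) ≤ p / (s - 1) := div_nonneg h0p.le (by linarith)
          rw [← mul_assoc, ← Real.mul_rpow (hpos _).le hdivnn]
          congr 2
          have hn0 : (0 : ℝ) ≤ (n : ℝ) := Nat.cast_nonneg n
          have hsne : s - 1 ≠ 0 := by linarith
          have hrec : poch ((p - 1) / p) (n + 1) = poch ((p - 1) / p) n * ((p - 1) / p + n) :=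
            Finset.prod_range_succ _ _
          have hne2 : ((n : ℝ) + 1) * p - 1 ≠ 0 := by nlinarith
          have hpne : p ≠ 0 := ne_of_gt h0p
          have hkey : ((p - 1) / p + (n : ℝ)) * (p / (((n : ℝ) + 1) * p - 1)) = 1 := by
            rw [div_add' _ _ _ hpne, div_mul_div_comm, div_eq_one_iff_eq (mul_ne_zero hpne hne2)]
            ring
          rw [hrec, hs_def, mul_assoc, hkey, mul_one]
        _ ≤ ∫ x in Set.Ioi (0 : ℝ), |iteratedDeriv l φ x| ^ p := ih hnl
  have hfin := key l le_rfl
  rw [Nat.sub_self, iteratedDeriv_zero] at hfin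
  rw [ge_iff_le]
  refine le_trans (le_of_eq ?_) hfin
  congr 1
  apply setIntegral_congr_fun measurableSet_Ioi
  intro x hx
  show |φ x| ^ p / x ^ ((l : ℝ) * p) = |φ x| ^ p * x ^ (-((l : ℝ) * p))
  rw [Real.rpow_neg (le_of_lt hx), div_eq_mul_inv]
end
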